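/- arXiv:2406.10192 — 7 statements merged into one kernel-verified Lean document; each statement's English description precedes it below -/
import Mathlib

section
/- Every forest admits an edge-coloring with 2 colors such that each color class induces a subgraph in which every non-isolated vertex has odd degree. -/
/-!
Strengthen the claim: for every vertex `r` and colour `a` a forest has a colouring that is odd
at every vertex other than `r` and gives colour `a` to every edge at `r`. This goes by induction
on the graph. If `r` has a neighbour `u`, the edge `ru` is a bridge; colour the two sides of
`G - ru` by induction, rooted at `r` with colour `a` and at `u` with a colour chosen from the
parity of the degree of `u`, and give `ru` colour `a`. If `r` is isolated, do the same with
any edge `xy`, choosing the root colours at both `x` and `y` from the parity of their degrees.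
-/

namespace SimpleGraph

variable {V : Type*}

def IsOddColoringAt (G : SimpleGraph V) (φ : Sym2 V → Fin 2) (v : V) : Prop :=
  ∀ j, {e ∈ G.incidenceSet v | φ e = j}.ncard = 0 ∨ Odd {e ∈ G.incidenceSet v | φ e = j}.ncard

def IsRootedOddColoring (G : SimpleGraph V) (r : V) (a : Fin 2) (φ : Sym2 V → Fin 2) : Prop :=
  (∀ v ≠ r, G.IsOddColoringAt φ v) ∧ ∀ e ∈ G.incidenceSet r, φ e = a

lemma IsOddColoringAt.congr {G H : SimpleGraph V} {φ ψ : Sym2 V → Fin 2} {v : V}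
    (h : H.IsOddColoringAt ψ v) (hI : G.incidenceSet v = H.incidenceSet v)
    (hφ : ∀ e ∈ G.incidenceSet v, φ e = ψ e) : G.IsOddColoringAt φ v := by
  have hclass : ∀ j, {e ∈ G.incidenceSet v | φ e = j} = {e ∈ H.incidenceSet v | ψ e = j} := by
    intro j
    ext e
    rw [Set.mem_sep_iff, Set.mem_sep_iff, ← hI]
    exact and_congr_right fun he => by rw [hφ e he]
  intro j
  rw [hclass]
  exact h j

lemma isOddColoringAt_of_incidenceSet_eq_empty {G : SimpleGraph V} {φ : Sym2 V → Fin 2} {v : V}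
    (hv : G.incidenceSet v = ∅) : G.IsOddColoringAt φ v := fun j => by simp [hv]

/-- If `v` has odd degree, all edges at `v` may share the colour `b`; otherwise all but one edge
of colour `b` take the other colour, and both colour classes at `v` are odd. -/
noncomputable def completingColor (G : SimpleGraph V) (v : V) (b : Fin 2) : Fin 2 :=
  if Odd (G.incidenceSet v).ncard then b else b + 1

lemma isOddColoringAt_of_forall_ne_eq_completingColor [Finite V] {G : SimpleGraph V}
    {φ : Sym2 V → Fin 2} {v : V} {ε : Sym2 V} (hε : ε ∈ G.incidenceSet v)
    (hrest : ∀ e ∈ G.incidenceSet v, e ≠ ε → φ e = G.completingColor v (φ ε)) :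
    G.IsOddColoringAt φ v := by
  set I := G.incidenceSet v
  have hcard := Set.ncard_sdiff_singleton_add_one hε (Set.toFinite I)
  intro j
  rcases Nat.even_or_odd I.ncard with hI | hI
  · have hγ : G.completingColor v (φ ε) = φ ε + 1 := if_neg (Nat.not_odd_iff_even.2 hI)
    rcases (by omega : j = φ ε ∨ j = φ ε + 1) with rfl | rfl
    · have : {e ∈ I | φ e = φ ε} = {ε} := by
        ext e
        by_cases he : e = ε
        · simp [he, hε]
        · simp only [Set.mem_sep_iff, he, Set.mem_singleton_iff, iff_false, not_and]
          intro heI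
          rw [hrest e heI he, hγ]
          omega
      rw [this, Set.ncard_singleton]
      exact Or.inr odd_one
    · have : {e ∈ I | φ e = φ ε + 1} = I \ {ε} := by
        ext e
        by_cases he : e = ε
        · simp [he]
        · simp only [Set.mem_sep_iff, Set.mem_sdiff, Set.mem_singleton_iff, he,
            not_false_eq_true, and_true]
          exact ⟨fun h => h.1, fun heI => ⟨heI, by rw [hrest e heI he, hγ]⟩⟩
      right
      rw [this]
      obtain ⟨k, hk⟩ := hI
      exact ⟨k - 1, by omega⟩
  · have hγ : G.completingColor v (φ ε) = φ ε := if_pos hI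
    rcases (by omega : j = φ ε ∨ j = φ ε + 1) with rfl | rfl
    · have : {e ∈ I | φ e = φ ε} = I := by
        refine Set.sep_eq_self_iff_mem_true.2 fun e heI => ?_
        by_cases he : e = ε
        · rw [he]
        · rw [hrest e heI he, hγ]
      right
      rwa [this]
    · have : {e ∈ I | φ e = φ ε + 1} = ∅ := by
        refine Set.sep_eq_empty_iff_mem_false.2 fun e heI => ?_
        by_cases he : e = ε
        · rw [he]; omega
        · rw [hrest e heI he, hγ]; omega
      left
      rw [this, Set.ncard_empty]

lemma incidenceSet_deleteEdges_singleton (G : SimpleGraph V) (ε : Sym2 V) (v : V) :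
    (G.deleteEdges {ε}).incidenceSet v = G.incidenceSet v \ {ε} := by
  ext e
  simp only [incidenceSet, edgeSet_deleteEdges, Set.mem_ofPred_eq, Set.mem_sdiff]
  tauto

lemma deleteEdges_singleton_lt {G : SimpleGraph V} {x y : V} (hxy : G.Adj x y) :
    G.deleteEdges {s(x, y)} < G :=
  (deleteEdges_le _).lt_of_ne fun h => by grind [deleteEdges_adj]

lemma exists_piecewise_reachable {β : Type*} (H : SimpleGraph V) (x : V)
    (φ ψ : Sym2 V → β) :
    ∃ χ : Sym2 V → β, ∀ v,
      (H.Reachable x v → ∀ e ∈ H.incidenceSet v, χ e = φ e) ∧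
      (¬ H.Reachable x v → ∀ e ∈ H.incidenceSet v, χ e = ψ e) := by
  classical
  refine ⟨fun e => if ∃ w ∈ e, H.Reachable x w then φ e else ψ e, fun v => ⟨?_, ?_⟩⟩
  · intro hxv e he
    exact if_pos ⟨v, he.2, hxv⟩
  · intro hxv e he
    refine if_neg ?_
    rintro ⟨w, hwe, hxw⟩
    by_cases hwv : w = v
    · exact hxv (hwv ▸ hxw)
    · exact hxv (hxw.trans (H.adj_of_mem_incidenceSet hwv ⟨he.1, hwe⟩ he).reachable)

lemma IsBridge.exists_isOddColoringAt_off_ends {G : SimpleGraph V} {x y : V}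
    (hbr : G.IsBridge s(x, y))
    (hpin : ∀ r a, ∃ φ, (G.deleteEdges {s(x, y)}).IsRootedOddColoring r a φ)
    (b γx γy : Fin 2) :
    ∃ φ : Sym2 V → Fin 2, φ s(x, y) = b ∧ (∀ v, v ≠ x → v ≠ y → G.IsOddColoringAt φ v) ∧
      (∀ e ∈ G.incidenceSet x, e ≠ s(x, y) → φ e = γx) ∧
      (∀ e ∈ G.incidenceSet y, e ≠ s(x, y) → φ e = γy) := by
  classical
  set H := G.deleteEdges {s(x, y)}
  have hH : ∀ v, H.incidenceSet v = G.incidenceSet v \ {s(x, y)} :=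
    incidenceSet_deleteEdges_singleton G _
  obtain ⟨φx, hφx_odd, hφx_root⟩ := hpin x γx
  obtain ⟨φy, hφy_odd, hφy_root⟩ := hpin y γy
  obtain ⟨χ, hχ⟩ := exists_piecewise_reachable H x φx φy
  have hupd : ∀ v, ∀ e ∈ G.incidenceSet v, e ≠ s(x, y) →
      Function.update χ s(x, y) b e = χ e ∧ e ∈ H.incidenceSet v :=
    fun v e he hne => ⟨Function.update_of_ne hne _ _, by rw [hH]; exact ⟨he, hne⟩⟩
  refine ⟨Function.update χ s(x, y) b, Function.update_self _ _ _, ?_, ?_, ?_⟩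
  · intro v hvx hvy
    have hv : v ∉ s(x, y) := by simp [hvx, hvy]
    have hI : G.incidenceSet v = H.incidenceSet v := by
      rw [hH, Set.sdiff_singleton_eq_self fun h => hv h.2]
    have hne : ∀ e ∈ G.incidenceSet v, e ≠ s(x, y) := fun e he h => hv (h ▸ he.2)
    by_cases hxv : H.Reachable x v
    · refine (hφx_odd v hvx).congr hI fun e he => ?_
      obtain ⟨hval, heH⟩ := hupd v e he (hne e he)
      rw [hval, (hχ v).1 hxv e heH]
    · refine (hφy_odd v hvy).congr hI fun e he => ?_
      obtain ⟨hval, heH⟩ := hupd v e he (hne e he)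
      rw [hval, (hχ v).2 hxv e heH]
  · intro e he hne
    obtain ⟨hval, heH⟩ := hupd x e he hne
    rw [hval, (hχ x).1 .rfl e heH, hφx_root e heH]
  · intro e he hne
    obtain ⟨hval, heH⟩ := hupd y e he hne
    rw [hval, (hχ y).2 (isBridge_iff.1 hbr) e heH, hφy_root e heH]

lemma IsBridge.exists_isRootedOddColoring [Finite V] {G : SimpleGraph V} {r u : V}
    (hru : G.Adj r u) (hbr : G.IsBridge s(r, u))
    (hpin : ∀ r' a', ∃ φ, (G.deleteEdges {s(r, u)}).IsRootedOddColoring r' a' φ) (a : Fin 2) :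
    ∃ φ, G.IsRootedOddColoring r a φ := by
  obtain ⟨φ, hφru, hodd, hr, hu⟩ :=
    hbr.exists_isOddColoringAt_off_ends hpin a a (G.completingColor u a)
  refine ⟨φ, fun v hvr => ?_, fun e he => ?_⟩
  · by_cases hvu : v = u
    · subst hvu
      exact isOddColoringAt_of_forall_ne_eq_completingColor
        (G.mk'_mem_incidenceSet_right_iff.2 hru) (hφru ▸ hu)
    · exact hodd v hvr hvu
  · by_cases her : e = s(r, u)
    · rw [her, hφru]
    · exact hr e he her

lemma IsAcyclic.exists_isOddColoringAt_of_deleteEdges [Finite V] {G : SimpleGraph V}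
    (hG : G.IsAcyclic)
    (hpin : ∀ x y, G.Adj x y → ∀ r a, ∃ φ, (G.deleteEdges {s(x, y)}).IsRootedOddColoring r a φ) :
    ∃ φ, ∀ v, G.IsOddColoringAt φ v := by
  rcases eq_or_ne G ⊥ with rfl | hne
  · exact ⟨fun _ => 0, fun v => isOddColoringAt_of_incidenceSet_eq_empty (by simp [incidenceSet])⟩
  obtain ⟨x, y, hxy⟩ := ne_bot_iff_exists_adj.1 hne
  obtain ⟨φ, hφxy, hodd, hx, hy⟩ :=
    (isAcyclic_iff_forall_adj_isBridge.1 hG hxy).exists_isOddColoringAt_off_ends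
      (hpin x y hxy) 0 (G.completingColor x 0) (G.completingColor y 0)
  refine ⟨φ, fun v => ?_⟩
  by_cases hvx : v = x
  · subst hvx
    exact isOddColoringAt_of_forall_ne_eq_completingColor
      ((G.mem_incidenceSet v y).2 hxy) (hφxy ▸ hx)
  by_cases hvy : v = y
  · subst hvy
    exact isOddColoringAt_of_forall_ne_eq_completingColor
      (G.mk'_mem_incidenceSet_right_iff.2 hxy) (hφxy ▸ hy)
  exact hodd v hvx hvy

theorem IsAcyclic.exists_isRootedOddColoring [Finite V] {G : SimpleGraph V} (hG : G.IsAcyclic)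
    (r : V) (a : Fin 2) : ∃ φ, G.IsRootedOddColoring r a φ := by
  classical
  induction G using WellFoundedLT.induction generalizing r a with
  | ind G ih =>
  have hpin : ∀ x y, G.Adj x y → ∀ r a,
      ∃ φ, (G.deleteEdges {s(x, y)}).IsRootedOddColoring r a φ :=
    fun x y hxy => ih _ (deleteEdges_singleton_lt hxy) (hG.anti (deleteEdges_le _))
  by_cases hr : ∃ u, G.Adj r u
  · obtain ⟨u, hru⟩ := hr
    exact (isAcyclic_iff_forall_adj_isBridge.1 hG hru).exists_isRootedOddColoring hru
      (hpin r u hru) a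
  · obtain ⟨φ, hφ⟩ := hG.exists_isOddColoringAt_of_deleteEdges hpin
    exact ⟨φ, fun v _ => hφ v, fun e he => (hr ⟨_, G.incidence_other_prop he⟩).elim⟩

end SimpleGraph

open SimpleGraph

/-- Every forest admits an edge-coloring with 2 colors such that each color class
induces a subgraph in which every non-isolated vertex has odd degree. -/
theorem stmt_0 {V : Type*} [Fintype V] (G : SimpleGraph V) (hG : G.IsAcyclic) :
    ∃ φ : Sym2 V → Fin 2, ∀ (v : V) (j : Fin 2),
      {e | e ∈ G.edgeSet ∧ φ e = j ∧ v ∈ e}.ncard = 0 ∨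
        Odd {e | e ∈ G.edgeSet ∧ φ e = j ∧ v ∈ e}.ncard := by
  obtain ⟨φ, hφ⟩ := hG.exists_isOddColoringAt_of_deleteEdges fun x y _ =>
    (hG.anti (deleteEdges_le _)).exists_isRootedOddColoring
  refine ⟨φ, fun v j => ?_⟩
  have hclass : {e | e ∈ G.edgeSet ∧ φ e = j ∧ v ∈ e} = {e ∈ G.incidenceSet v | φ e = j} := by
    ext e
    simp only [incidenceSet, Set.mem_ofPred_eq]
    tauto
  rw [hclass]
  exact hφ v j
end

section
/- Every connected multigraph (loopless) of even order admits an odd 3-edge-coloring, i.e., its edges can be partitioned into at most 3 classes each inducing a subgraph with all nonzero degrees odd. -/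
/-!
Fix a spanning tree rooted at `r` and view edge sets as vectors over `ZMod 2`. Every vertex
set `t` of even size is the odd-degree set of a set of tree edges: the sum of the tree paths
from the vertices of `t` to `r` (a `t`-join). Taking `t` to be the set of vertices of even
degree in the non-tree edges, which is even because `|V|` is even, the non-tree edges together
with this `t`-join form a spanning subgraph in which every degree is odd; this is the first
colour class. What remains is a set of tree edges, i.e. a forest, and every forest has an odd
2-edge-colouring: colour top-down, giving the edges from a vertex to its children the colour of
its parent edge, except that one child edge takes the other colour when the number of forest
edges at the vertex is even.
-/

open Finset

lemma card_filter_eq_zero_or_odd_of_single_flip {α : Type*} [DecidableEq α] (N : Finset α)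
    (f : α → Fin 2) (m : Fin 2) (p : α)
    (hf : ∀ x ∈ N, f x = if x = p ∧ Even #N then m + 1 else m)
    (hp : Even #N → N.Nonempty → p ∈ N) (c : Fin 2) :
    #{x ∈ N | f x = c} = 0 ∨ Odd #{x ∈ N | f x = c} := by
  have hfin : ∀ a b : Fin 2, a + 1 ≠ a ∧ (b = a ∨ b = a + 1) := by decide
  obtain ⟨hm, rfl | rfl⟩ := hfin m c
  · by_cases hN : Even #N
    · rcases N.eq_empty_or_nonempty with rfl | hne
      · simp
      have hfilter : {x ∈ N | f x = c} = N.erase p := by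
        rw [← Finset.filter_ne']
        refine Finset.filter_congr fun x hx => ?_
        by_cases hxp : x = p
        · subst hxp
          simp [hf x hx, hN, hm]
        · simp [hf x hx, hxp]
      rw [hfilter, Finset.card_erase_of_mem (hp hN hne)]
      exact .inr (Nat.Even.sub_odd hne.card_pos hN odd_one)
    · rw [Finset.filter_true_of_mem fun x hx => by simp [hf x hx, hN]]
      exact .inr (Nat.not_even_iff_odd.1 hN)
  · by_cases hN : Even #N
    · rcases N.eq_empty_or_nonempty with rfl | hne
      · simp
      have hfilter : {x ∈ N | f x = m + 1} = {p} := by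
        ext x
        simp only [Finset.mem_filter, Finset.mem_singleton]
        constructor
        · rintro ⟨hx, hfx⟩
          by_contra hxp
          simp [hf x hx, hxp, hm.symm] at hfx
        · rintro rfl
          exact ⟨hp hN hne, by simp [hf x (hp hN hne), hN]⟩
      simp [hfilter]
    · rw [Finset.filter_false_of_mem fun x hx => by simp [hf x hx, hN, hm.symm]]
      simp

lemma SimpleGraph.Reachable.exists_adj_dist_lt {V : Type*} {G : SimpleGraph V} {v w : V}
    (h : G.Reachable v w) (hvw : v ≠ w) : ∃ u, G.Adj v u ∧ G.dist u w < G.dist v w := by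
  obtain ⟨p, hp⟩ := h.exists_walk_length_eq_dist
  cases p with
  | nil => exact absurd rfl hvw
  | cons hadj q => exact ⟨_, hadj, by have := SimpleGraph.dist_le q; simp at hp; omega⟩

namespace Multigraph

open scoped Classical

variable {V E : Type*}

structure RootedSpanningTree (ends : E → Sym2 V) (root : V) where
  parent : V → V
  parentEdge : V → E
  depth : V → ℕ
  depth_parent_lt : ∀ v, v ≠ root → depth (parent v) < depth v
  ends_parentEdge : ∀ v, v ≠ root → ends (parentEdge v) = s(v, parent v)

lemma RootedSpanningTree.nonempty [Nonempty E] (ends : E → Sym2 V) (root : V)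
    (hconn : ∀ v, Relation.ReflTransGen (fun a b => ∃ e, ends e = s(a, b)) v root) :
    Nonempty (RootedSpanningTree ends root) := by
  let G := SimpleGraph.fromRel fun a b => ∃ e, ends e = s(a, b)
  have hstep : ∀ v, v ≠ root → ∃ u e, ends e = s(v, u) ∧ G.dist u root < G.dist v root := by
    intro v hv
    have hreach : G.Reachable v root := by
      refine (SimpleGraph.reachable_iff_reflTransGen v root).2
        ((hconn v).lift' id fun a b hab => ?_)
      by_cases h : a = b
      · exact h ▸ .refl
      · exact .single ((SimpleGraph.fromRel_adj _ a b).2 ⟨h, .inl hab⟩)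
    obtain ⟨u, hadj, hlt⟩ := hreach.exists_adj_dist_lt hv
    obtain ⟨-, ⟨e, he⟩ | ⟨e, he⟩⟩ := (SimpleGraph.fromRel_adj _ _ _).1 hadj
    · exact ⟨u, e, he, hlt⟩
    · exact ⟨u, e, he.trans Sym2.eq_swap, hlt⟩
  choose! parent parentEdge h using hstep
  exact ⟨⟨parent, parentEdge, (G.dist · root), fun v hv => (h v hv).2, fun v hv => (h v hv).1⟩⟩

namespace RootedSpanningTree

variable {ends : E → Sym2 V} {r : V} (T : RootedSpanningTree ends r)

def IsTreeEdge (e : E) : Prop := ∃ u, u ≠ r ∧ T.parentEdge u = e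

lemma parent_ne {v : V} (hv : v ≠ r) : T.parent v ≠ v :=
  fun h => (T.depth_parent_lt v hv).ne (congrArg T.depth h)

lemma mem_ends_parentEdge {u : V} (hu : u ≠ r) (v : V) :
    v ∈ ends (T.parentEdge u) ↔ v = u ∨ v = T.parent u := by
  rw [T.ends_parentEdge u hu, Sym2.mem_iff]

lemma parentEdge_injOn : Set.InjOn T.parentEdge {u | u ≠ r} := by
  intro u hu w hw h
  have := congrArg ends h
  rw [T.ends_parentEdge u hu, T.ends_parentEdge w hw, Sym2.eq_iff] at this
  rcases this with ⟨huw, -⟩ | ⟨huw, hwu⟩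
  · exact huw
  · have hu' := T.depth_parent_lt u hu
    have hw' := T.depth_parent_lt w hw
    rw [hwu] at hu'
    rw [← huw] at hw'
    omega

noncomputable def pathVec (v : V) : E → ZMod 2 :=
  if h : v = r then 0 else Pi.single (T.parentEdge v) 1 + pathVec (T.parent v)
termination_by T.depth v
decreasing_by exact T.depth_parent_lt v h

lemma pathVec_apply_eq_zero {e : E} (he : ¬ T.IsTreeEdge e) (v : V) : T.pathVec v e = 0 := by
  rw [pathVec]
  split_ifs with hv
  · rfl
  · rw [Pi.add_apply, pathVec_apply_eq_zero he, Pi.single_apply, if_neg fun h => he ⟨v, hv, h.symm⟩,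
      add_zero]
termination_by T.depth v
decreasing_by exact T.depth_parent_lt v hv

section Forest

variable (S : Finset V)

/-- For `r ∉ S`, `parentEdge` maps `T.star S v` onto the edges of the forest
`parentEdge '' S` at `v`. -/
noncomputable def star (v : V) : Finset V := {u ∈ S | u = v ∨ T.parent u = v}

noncomputable def flipChild (v : V) : V :=
  if h : ∃ u, u ∈ S ∧ T.parent u = v then h.choose else v

/-- The colour of the edge `parentEdge v` in the odd 2-edge-colouring of the forest
`parentEdge '' S`. -/
noncomputable def forestColor (v : V) : Fin 2 :=
  if h : v = r then 0
  else forestColor (T.parent v) +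
    if v = T.flipChild S (T.parent v) ∧ Even #(T.star S (T.parent v)) then 1 else 0
termination_by T.depth v
decreasing_by exact T.depth_parent_lt v h

variable {S}

lemma flipChild_mem_star (hS : r ∉ S) {v : V} (heven : Even #(T.star S v))
    (hne : (T.star S v).Nonempty) : T.flipChild S v ∈ T.star S v ∧ T.flipChild S v ≠ v := by
  have hcard : 1 < #(T.star S v) := by
    have := hne.card_pos
    rcases heven with ⟨k, hk⟩
    omega
  obtain ⟨w, hw, hwv⟩ := Finset.exists_mem_ne hcard v
  have hex : ∃ u, u ∈ S ∧ T.parent u = v := by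
    obtain ⟨hwS, hwv'⟩ := Finset.mem_filter.1 hw
    exact ⟨w, hwS, hwv'.resolve_left hwv⟩
  obtain ⟨hflipS, hflip⟩ : T.flipChild S v ∈ S ∧ T.parent (T.flipChild S v) = v := by
    rw [flipChild, dif_pos hex]
    exact hex.choose_spec
  refine ⟨Finset.mem_filter.2 ⟨hflipS, .inr hflip⟩, fun h => ?_⟩
  exact T.parent_ne (ne_of_mem_of_not_mem hflipS hS) (hflip.trans h.symm)

lemma forestColor_of_mem_star (hS : r ∉ S) {u v : V} (hu : u ∈ T.star S v) :
    T.forestColor S u =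
      if u = T.flipChild S v ∧ Even #(T.star S v) then T.forestColor S v + 1
      else T.forestColor S v := by
  obtain ⟨huS, rfl | rfl⟩ := Finset.mem_filter.1 hu
  · rw [if_neg fun h => (T.flipChild_mem_star hS h.2 ⟨u, hu⟩).2 h.1.symm]
  · rw [forestColor, dif_neg (ne_of_mem_of_not_mem huS hS)]
    split_ifs <;> simp

lemma card_filter_forestColor (hS : r ∉ S) (v : V) (c : Fin 2) :
    #{u ∈ T.star S v | T.forestColor S u = c} = 0 ∨
      Odd #{u ∈ T.star S v | T.forestColor S u = c} :=
  card_filter_eq_zero_or_odd_of_single_flip _ _ _ _ (fun _ hu => T.forestColor_of_mem_star hS hu)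
    (fun heven hne => (T.flipChild_mem_star hS heven hne).1) c

lemma exists_odd_coloring_of_isTreeEdge [Fintype V] (F : Finset E)
    (hF : ∀ e ∈ F, T.IsTreeEdge e) :
    ∃ ψ : E → Fin 2, ∀ v c, #{e ∈ F | ψ e = c ∧ v ∈ ends e} = 0 ∨
      Odd #{e ∈ F | ψ e = c ∧ v ∈ ends e} := by
  let S : Finset V := {u | u ≠ r ∧ T.parentEdge u ∈ F}
  let vertexOf : E → V := fun e => if h : T.IsTreeEdge e then h.choose else r
  have hvertexOf : ∀ e, T.IsTreeEdge e → vertexOf e ≠ r ∧ T.parentEdge (vertexOf e) = e :=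
    fun e he => by simpa [vertexOf, he] using he.choose_spec
  have hvertexOf_parentEdge : ∀ u, u ≠ r → vertexOf (T.parentEdge u) = u := fun u hu =>
    T.parentEdge_injOn (hvertexOf _ ⟨u, hu, rfl⟩).1 hu (hvertexOf _ ⟨u, hu, rfl⟩).2
  refine ⟨fun e => T.forestColor S (vertexOf e), fun v c => ?_⟩
  have himage : {e ∈ F | T.forestColor S (vertexOf e) = c ∧ v ∈ ends e} =
      {u ∈ T.star S v | T.forestColor S u = c}.image T.parentEdge := by
    ext e
    simp only [Finset.mem_filter, Finset.mem_image, star, S, Finset.mem_univ, true_and]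
    constructor
    · rintro ⟨heF, hc, hv⟩
      obtain ⟨hu, hpe⟩ := hvertexOf e (hF e heF)
      refine ⟨vertexOf e, ⟨⟨⟨hu, by rw [hpe]; exact heF⟩, ?_⟩, hc⟩, hpe⟩
      rw [← hpe, T.mem_ends_parentEdge hu] at hv
      exact hv.imp Eq.symm Eq.symm
    · rintro ⟨u, ⟨⟨⟨hu, huF⟩, hv⟩, hc⟩, rfl⟩
      refine ⟨huF, by rw [hvertexOf_parentEdge u hu, hc], ?_⟩
      rw [T.mem_ends_parentEdge hu]
      exact hv.imp Eq.symm Eq.symm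
  have hS : r ∉ S := by simp [S]
  rw [himage, Finset.card_image_of_injOn
    (T.parentEdge_injOn.mono fun u hu => ne_of_mem_of_not_mem (by simp_all [star]) hS)]
  exact T.card_filter_forestColor hS v c

end Forest

end RootedSpanningTree

variable [Fintype E]

/-- Edge sets are vectors `E → ZMod 2`; `boundary ends x v` is the parity of the `x`-degree of
`v`. -/
noncomputable def boundary (ends : E → Sym2 V) : (E → ZMod 2) →ₗ[ZMod 2] (V → ZMod 2) :=
  Matrix.mulVecLin (Matrix.of fun v e => if v ∈ ends e then 1 else 0)

lemma boundary_apply (ends : E → Sym2 V) (x : E → ZMod 2) (v : V) :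
    boundary ends x v = ∑ e with v ∈ ends e, x e := by
  simp [boundary, Matrix.mulVec, dotProduct, Finset.sum_filter]

lemma sum_boundary_eq_zero [Fintype V] (ends : E → Sym2 V) (hloopless : ∀ e, ¬ (ends e).IsDiag)
    (x : E → ZMod 2) : ∑ v, boundary ends x v = 0 := by
  have hends : ∀ e, #{v | v ∈ ends e} = 2 := fun e => by
    rw [← Sym2.card_toFinset_of_not_isDiag _ (hloopless e)]
    congr 1; ext v; simp
  simp_rw [boundary_apply, Finset.sum_filter]
  rw [Finset.sum_comm]
  simp [← Finset.sum_filter, hends, show (2 : ZMod 2) = 0 from rfl]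

lemma natCast_card_filter_eq_boundary (ends : E → Sym2 V) (x : E → ZMod 2) (v : V) :
    ((#{e | x e = 1 ∧ v ∈ ends e} : ℕ) : ZMod 2) = boundary ends x v := by
  rw [boundary_apply, Finset.card_filter, Nat.cast_sum, Finset.sum_filter]
  refine Finset.sum_congr rfl fun e _ => ?_
  rcases (by decide : ∀ a : ZMod 2, a = 0 ∨ a = 1) (x e) with h | h <;>
    by_cases hv : v ∈ ends e <;> simp [h, hv]

lemma boundary_single {ends : E → Sym2 V} {e : E} {a b : V} (he : ends e = s(a, b))
    (hab : a ≠ b) : boundary ends (Pi.single e 1) = Pi.single a 1 + Pi.single b 1 := by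
  ext v
  rw [boundary_apply, Finset.sum_filter, Finset.sum_eq_single e (fun f _ hf => by simp [hf])
    (by simp), he]
  simp only [Pi.single_eq_same, Sym2.mem_iff, Pi.add_apply, Pi.single_apply]
  by_cases hva : v = a <;> by_cases hvb : v = b <;> simp_all

namespace RootedSpanningTree

variable {ends : E → Sym2 V} {r : V} (T : RootedSpanningTree ends r)

lemma boundary_pathVec (v : V) :
    boundary ends (T.pathVec v) = Pi.single v 1 + Pi.single r 1 := by
  rw [pathVec]
  split_ifs with hv
  · rw [map_zero, hv, ZModModule.add_self]
  · rw [map_add, boundary_single (T.ends_parentEdge v hv) (T.parent_ne hv).symm,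
      boundary_pathVec, add_assoc, ← add_assoc (Pi.single (T.parent v) 1), ZModModule.add_self,
      zero_add]
termination_by T.depth v
decreasing_by exact T.depth_parent_lt v hv

variable [Fintype V]

lemma exists_boundary_eq_of_sum_eq_zero (t : V → ZMod 2) (ht : ∑ v, t v = 0) :
    ∃ x : E → ZMod 2, boundary ends x = t ∧ ∀ e, ¬ T.IsTreeEdge e → x e = 0 := by
  refine ⟨∑ w, t w • T.pathVec w, ?_, fun e he => by simp [T.pathVec_apply_eq_zero he]⟩
  simp only [map_sum, map_smul, boundary_pathVec, smul_add, Finset.sum_add_distrib,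
    ← Finset.sum_smul, ht, zero_smul, add_zero]
  ext v
  simp [Pi.single_apply]

lemma exists_boundary_eq_one (hloopless : ∀ e, ¬ (ends e).IsDiag)
    (heven : Even (Fintype.card V)) :
    ∃ y : E → ZMod 2, boundary ends y = 1 ∧ ∀ e, ¬ T.IsTreeEdge e → y e = 1 := by
  let χ : E → ZMod 2 := fun e => if T.IsTreeEdge e then 0 else 1
  obtain ⟨x, hx, hxT⟩ := T.exists_boundary_eq_of_sum_eq_zero (1 + boundary ends χ) (by
    simp only [Pi.add_apply, Pi.one_apply]
    rw [Finset.sum_add_distrib, sum_boundary_eq_zero ends hloopless, add_zero]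
    simpa using heven.natCast_zmod_two)
  refine ⟨χ + x, ?_, fun e he => by simp [χ, he, hxT e he]⟩
  rw [map_add, hx, add_left_comm, ZModModule.add_self, add_zero]

end RootedSpanningTree

end Multigraph

open Multigraph

/-- Every connected loopless multigraph of even order admits an odd 3-edge-coloring:
its edges can be partitioned into at most 3 classes, each inducing a subgraph with
all nonzero degrees odd. A multigraph is given by an edge type `E` together with an
endpoints map `ends : E → Sym2 V` avoiding the diagonal. -/
theorem stmt_2 {V E : Type*} [Fintype V] [Fintype E] [Nonempty V]
    (ends : E → Sym2 V)
    (hloopless : ∀ e, ¬ (ends e).IsDiag)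
    (hconn : ∀ u v : V,
      Relation.ReflTransGen (fun a b => ∃ e, ends e = s(a, b)) u v)
    (heven : Even (Fintype.card V)) :
    ∃ φ : E → Fin 3, ∀ (v : V) (j : Fin 3),
      {e | φ e = j ∧ v ∈ ends e}.ncard = 0 ∨
        Odd {e | φ e = j ∧ v ∈ ends e}.ncard := by
  classical
  obtain ⟨r⟩ := ‹Nonempty V›
  cases isEmpty_or_nonempty E
  · exact ⟨isEmptyElim, fun v j => .inl (by simp [Set.eq_empty_of_isEmpty])⟩
  obtain ⟨T⟩ := RootedSpanningTree.nonempty ends r fun v => hconn v r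
  obtain ⟨y, hy, hyT⟩ := T.exists_boundary_eq_one hloopless heven
  obtain ⟨ψ, hψ⟩ := T.exists_odd_coloring_of_isTreeEdge {e | y e ≠ 1}
    fun e he => by_contra fun h => (Finset.mem_filter.1 he).2 (hyT e h)
  refine ⟨fun e => if y e = 1 then 0 else (ψ e).succ, fun v j => ?_⟩
  rw [Set.ncard_eq_toFinset_card', Set.toFinset_ofPred]
  cases j using Fin.cases with
  | zero =>
    have hodd := natCast_card_filter_eq_boundary ends y v
    rw [hy, Pi.one_apply, ZMod.natCast_eq_one_iff_odd] at hodd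
    refine .inr (by convert hodd using 2; ext e; by_cases h : y e = 1 <;> simp [h])
  | succ c =>
    convert hψ v c using 3 <;>
      (ext e; by_cases h : y e = 1 <;> simp [h, (Fin.succ_ne_zero c).symm])
end

section
/- If G is a connected loopless multigraph that contains a bridge, then G admits an odd 3-edge-coloring. -/
/-!
Let `e₀ = pq` be the bridge. The side of `p`, i.e. the edges meeting the component of `p` in
`G - e₀` together with `e₀`, is connected and has `q` as a pendant vertex; symmetrically for the
side of `q`. Odd 3-edge-colourings of the two sides glue, after permuting the colours of one of
them so that both give `e₀` the same colour.

A connected graph `X` with a pendant vertex `t` is coloured as follows. Let `T` be the set of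
vertices of positive even degree, and `F` an inclusion-minimal join of `T` (or of `T ∪ {t}`, to
make its size even); minimality makes `F` a forest. Outside `F` every degree is odd or zero (at `t`
because it is at most `1`), so the edges outside `F` take colour `0`. A forest is oddly
2-edge-colourable: colour the star of a root, then recurse on the rest, where each neighbour of
the root remembers the colour of its edge to the root as a token.
-/

open Finset
open scoped symmDiff

theorem Finset.filter_symmDiff {α : Type*} [DecidableEq α] (p : α → Prop) [DecidablePred p]
    (s t : Finset α) : {a ∈ s ∆ t | p a} = {a ∈ s | p a} ∆ {a ∈ t | p a} := by
  ext
  simp only [mem_filter, mem_symmDiff]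
  tauto

theorem Finset.odd_card_symmDiff {α : Type*} [DecidableEq α] (s t : Finset α) :
    Odd #(s ∆ t) ↔ (Odd #s ↔ Even #t) := by
  have key : #(s ∆ t) + 2 * #(s ∩ t) = #s + #t := by
    rw [Finset.symmDiff_def, card_union_of_disjoint disjoint_sdiff_sdiff]
    have hs := card_sdiff_add_card_inter s t
    have ht := card_sdiff_add_card_inter t s
    rw [inter_comm t s] at ht
    omega
  rw [← Nat.odd_add, ← key]
  simp [Nat.odd_add]

theorem Finset.filter_piecewise {α κ : Type*} [DecidableEq α] [DecidableEq κ] {s t : Finset α}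
    (hst : s ⊆ t) (f g : α → κ) (c : κ) :
    {a ∈ t | s.piecewise f g a = c} = {a ∈ s | f a = c} ∪ {a ∈ t \ s | g a = c} := by
  ext a
  by_cases ha : a ∈ s
  · simp [ha, hst ha]
  · simp [ha]

namespace OddEdgeColoring

variable {V E : Type*} {ends : E → Sym2 V}

def OddOrZero (n : ℕ) : Prop := n = 0 ∨ Odd n

variable (ends) in
def Joined (A : Set E) : V → V → Prop :=
  Relation.ReflTransGen fun x y => ∃ e ∈ A, ends e = s(x, y)

theorem ne_of_ends_eq (hloop : ∀ e, ¬ (ends e).IsDiag) {e : E} {a b : V}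
    (he : ends e = s(a, b)) : a ≠ b :=
  fun h => hloop e (by rw [he, h]; exact Sym2.mk_isDiag_iff.mpr rfl)

theorem Joined.symm {A : Set E} {u v : V} (h : Joined ends A u v) : Joined ends A v u := by
  have : Std.Symm fun x y => ∃ e ∈ A, ends e = s(x, y) :=
    ⟨fun _ _ ⟨e, hA, he⟩ => ⟨e, hA, he.trans Sym2.eq_swap⟩⟩
  exact Relation.ReflTransGen.stdSymm.symm _ _ h

theorem Joined.trans {A : Set E} {u v w : V} (h₁ : Joined ends A u v) (h₂ : Joined ends A v w) :
    Joined ends A u w :=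
  Relation.ReflTransGen.trans h₁ h₂

theorem Joined.mono {A B : Set E} (hAB : A ⊆ B) {u v : V} (h : Joined ends A u v) :
    Joined ends B u v :=
  Relation.ReflTransGen.mono (fun _ _ ⟨e, hA, he⟩ => ⟨e, hAB hA, he⟩) _ _ h

theorem joined_of_mem {A : Set E} {e : E} (hA : e ∈ A) {u v : V} (hu : u ∈ ends e)
    (hv : v ∈ ends e) : Joined ends A u v := by
  by_cases huv : u = v
  · exact huv ▸ Relation.ReflTransGen.refl
  · exact Relation.ReflTransGen.single ⟨e, hA, (Sym2.mem_and_mem_iff huv).mp ⟨hu, hv⟩⟩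

theorem Joined.exists_mem_ends {A : Set E} {u v : V} (h : Joined ends A u v) (huv : u ≠ v) :
    ∃ e ∈ A, u ∈ ends e := by
  rcases h.cases_head with rfl | ⟨w, ⟨e, hA, he⟩, -⟩
  · exact absurd rfl huv
  · exact ⟨e, hA, he ▸ Sym2.mem_mk_left u w⟩

theorem Joined.within_component {A : Set E} {u p : V} (h : Joined ends A u p) :
    Joined ends {e | ∃ w ∈ ends e, Joined ends A w p} u p := by
  induction h using Relation.ReflTransGen.head_induction_on with
  | refl => exact Relation.ReflTransGen.refl
  | head hstep htail ih =>
    obtain ⟨e, -, he⟩ := hstep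
    exact Relation.ReflTransGen.head ⟨e, ⟨_, he ▸ Sym2.mem_mk_right _ _, htail⟩, he⟩ ih

theorem joined_or_joined_of_connected (hconn : ∀ u v, Joined ends Set.univ u v) {e₀ : E}
    {p q : V} (he₀ : ends e₀ = s(p, q)) (v : V) :
    Joined ends {e | e ≠ e₀} v p ∨ Joined ends {e | e ≠ e₀} v q := by
  induction hconn p v with
  | refl => exact Or.inl Relation.ReflTransGen.refl
  | @tail b c _ hbc ih =>
    obtain ⟨e, -, he⟩ := hbc
    by_cases hee₀ : e = e₀
    · rw [hee₀, he₀] at he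
      rcases Sym2.eq_iff.mp he with ⟨-, rfl⟩ | ⟨rfl, -⟩
      exacts [Or.inr Relation.ReflTransGen.refl, Or.inl Relation.ReflTransGen.refl]
    · have hcb : Joined ends {e | e ≠ e₀} c b :=
        Relation.ReflTransGen.single ⟨e, hee₀, he.trans Sym2.eq_swap⟩
      exact ih.imp hcb.trans hcb.trans

theorem not_joined_of_not_connected (hconn : ∀ u v, Joined ends Set.univ u v) {e₀ : E}
    {p q : V} (he₀ : ends e₀ = s(p, q)) (hbridge : ¬ ∀ u v, Joined ends {e | e ≠ e₀} u v) :
    ¬ Joined ends {e | e ≠ e₀} p q := by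
  intro hpq
  have hp : ∀ v, Joined ends {e | e ≠ e₀} v p := fun v =>
    (joined_or_joined_of_connected hconn he₀ v).elim id (·.trans hpq.symm)
  exact hbridge fun u v => (hp u).trans (hp v).symm

section Side

variable [Fintype E] {e₀ : E} {p q : V}

open Classical in
variable (ends) in
/-- For a bridge `e₀ = pq`: the edges of the component of `p` in `G - e₀`, together with `e₀`. -/
noncomputable def side (e₀ : E) (p : V) : Finset E :=
  {e | ∃ w ∈ ends e, Joined ends {e | e ≠ e₀} w p}

theorem mem_side {e : E} :
    e ∈ side ends e₀ p ↔ ∃ w ∈ ends e, Joined ends {e | e ≠ e₀} w p := by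
  simp [side]

theorem eq_of_mem_side {e : E} (he : e ∈ side ends e₀ p) {v : V} (hv : v ∈ ends e)
    (hvp : ¬ Joined ends {e | e ≠ e₀} v p) : e = e₀ := by
  by_contra hne
  obtain ⟨w, hw, hwp⟩ := mem_side.mp he
  exact hvp ((joined_of_mem hne hv hw).trans hwp)

end Side

theorem exists_root {F : Finset E} (hF : F.Nonempty) (τ : V → Option (Fin 2))
    (hτ : ∀ u v, u ≠ v → (τ u).isSome → (τ v).isSome → ¬ Joined ends F u v) :
    ∃ r, (∃ e ∈ F, r ∈ ends e) ∧ ∀ v, v ≠ r → (τ v).isSome → ¬ Joined ends F v r := by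
  by_cases h : ∃ r, (τ r).isSome ∧ ∃ e ∈ F, r ∈ ends e
  · obtain ⟨r, hr, he⟩ := h
    exact ⟨r, he, fun v hvr hv => hτ v r hvr hv hr⟩
  · obtain ⟨e, he⟩ := hF
    obtain ⟨⟨a, b⟩, hab⟩ := Quot.exists_rep (ends e)
    refine ⟨a, ⟨e, he, hab ▸ Sym2.mem_mk_left a b⟩, fun v hva hv hjoin => h ⟨v, hv, ?_⟩⟩
    exact hjoin.exists_mem_ends hva

section Degrees

variable [DecidableEq V]

variable (ends) in
def deg (F : Finset E) (v : V) : ℕ := #{e ∈ F | v ∈ ends e}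

variable (ends) in
def IsOddColoring {κ : Type*} [DecidableEq κ] (F : Finset E) (φ : E → κ) : Prop :=
  ∀ v c, OddOrZero (deg ends {e ∈ F | φ e = c} v)

variable (ends) in
def boundary (F : Finset E) : Set V := {v | Odd (deg ends F v)}

variable (ends) in
/-- Forests in the language of the cycle space: no nonempty subgraph has all degrees even. -/
def IsForest (F : Finset E) : Prop := ∀ C ⊆ F, boundary ends C = ∅ → C = ∅

theorem deg_mono {F G : Finset E} (h : F ⊆ G) (v : V) : deg ends F v ≤ deg ends G v :=
  card_le_card (filter_subset_filter _ h)

theorem boundary_singleton {e : E} {a b : V} (he : ends e = s(a, b)) (hab : a ≠ b) :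
    boundary ends {e} = {a} ∆ {b} := by
  ext v
  simp only [boundary, deg, filter_singleton, he, Sym2.mem_iff, Set.mem_ofPred, Set.mem_symmDiff,
    Set.mem_singleton_iff]
  by_cases hv : v = a ∨ v = b
  · rw [if_pos hv]
    simp only [card_singleton, odd_one, true_iff]
    grind
  · rw [if_neg hv]
    simp only [card_empty, Nat.not_odd_zero, false_iff]
    grind

theorem IsForest.mono {F G : Finset E} (h : F ⊆ G) (hG : IsForest ends G) : IsForest ends F :=
  fun C hC h0 => hG C (hC.trans h) h0

theorem oddOrZero_deg_of_agree {κ : Type*} [DecidableEq κ] {X Y : Finset E} {φ ψ : E → κ}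
    (σ : κ ≃ κ) {v : V} (hψ : ∀ c, OddOrZero (deg ends {e ∈ X | ψ e = c} v))
    (hXY : ∀ e, v ∈ ends e → (e ∈ Y ↔ e ∈ X)) (hφ : ∀ e ∈ X, v ∈ ends e → φ e = σ (ψ e))
    (c : κ) : OddOrZero (deg ends {e ∈ Y | φ e = c} v) := by
  convert hψ (σ.symm c) using 1
  rw [deg, deg, filter_filter, filter_filter]
  congr 1
  ext e
  simp only [mem_filter]
  constructor
  · rintro ⟨heY, rfl, hv⟩
    have heX := (hXY e hv).mp heY
    exact ⟨heX, by rw [hφ e heX hv, Equiv.symm_apply_apply], hv⟩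
  · rintro ⟨heX, hc, hv⟩
    exact ⟨(hXY e hv).mpr heX, by rw [hφ e heX hv, hc, Equiv.apply_symm_apply], hv⟩

variable (ends) in
noncomputable def passTokens (r : V) (S : Finset E) (κ : E → Fin 2) (τ : V → Option (Fin 2))
    (v : V) : Option (Fin 2) :=
  if v = r then none else if h : ∃ e ∈ S, v ∈ ends e then some (κ h.choose) else τ v

theorem isSome_passTokens {r v : V} {S : Finset E} {κ : E → Fin 2} {τ : V → Option (Fin 2)}
    (h : (passTokens ends r S κ τ v).isSome) :
    v ≠ r ∧ ((∃ e ∈ S, v ∈ ends e) ∨ (τ v).isSome) := by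
  unfold passTokens at h
  split_ifs at h with hvr hS
  · simp at h
  · exact ⟨hvr, Or.inl hS⟩
  · exact ⟨hvr, Or.inr h⟩

section Bridge

variable [Fintype E] {e₀ : E} {p q : V}

variable (he₀ : ends e₀ = s(p, q)) (hpq : ¬ Joined ends {e | e ≠ e₀} p q)
include he₀ hpq

theorem deg_side_eq_one : deg ends (side ends e₀ p) q = 1 := by
  have hq : q ∈ ends e₀ := he₀ ▸ Sym2.mem_mk_right p q
  rw [deg, card_eq_one]
  refine ⟨e₀, eq_singleton_iff_unique_mem.mpr ⟨mem_filter.mpr ⟨?_, hq⟩, fun e he => ?_⟩⟩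
  · exact mem_side.mpr ⟨p, he₀ ▸ Sym2.mem_mk_left p q, Relation.ReflTransGen.refl⟩
  · obtain ⟨he, hqe⟩ := mem_filter.mp he
    exact eq_of_mem_side he hqe fun h => hpq h.symm

theorem joined_side_of_deg_ne_zero (u : V) (hu : deg ends (side ends e₀ p) u ≠ 0) :
    Joined ends ↑(side ends e₀ p) u q := by
  have he₀side : e₀ ∈ side ends e₀ p :=
    mem_side.mpr ⟨p, he₀ ▸ Sym2.mem_mk_left p q, Relation.ReflTransGen.refl⟩
  obtain ⟨e, he⟩ := card_ne_zero.mp hu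
  obtain ⟨he, hue⟩ := mem_filter.mp he
  by_cases hup : Joined ends {e | e ≠ e₀} u p
  · refine (hup.within_component.mono fun e he => mem_side.mpr he).trans ?_
    exact Relation.ReflTransGen.single ⟨e₀, he₀side, he₀⟩
  · rw [eq_of_mem_side he hue hup, he₀] at hue
    rcases Sym2.mem_iff.mp hue with rfl | rfl
    exacts [absurd Relation.ReflTransGen.refl hup, Relation.ReflTransGen.refl]

end Bridge

variable [DecidableEq E]

theorem deg_sdiff {F G : Finset E} (h : F ⊆ G) (v : V) :
    deg ends (G \ F) v = deg ends G v - deg ends F v := by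
  rw [deg, deg, deg, ← card_sdiff_of_subset (filter_subset_filter _ h)]
  congr 1
  ext
  simp only [mem_filter, mem_sdiff]
  tauto

theorem deg_union {F G : Finset E} (h : Disjoint F G) (v : V) :
    deg ends (F ∪ G) v = deg ends F v + deg ends G v := by
  rw [deg, deg, deg, filter_union, card_union_of_disjoint (disjoint_filter_filter h)]

theorem boundary_symmDiff (F G : Finset E) :
    boundary ends (F ∆ G) = boundary ends F ∆ boundary ends G := by
  ext v
  simp only [boundary, deg, Set.mem_symmDiff, Set.mem_ofPred, filter_symmDiff, odd_card_symmDiff,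
    ← Nat.not_odd_iff_even]
  tauto

theorem boundary_sdiff {C F : Finset E} (h : C ⊆ F) :
    boundary ends (F \ C) = boundary ends F ∆ boundary ends C := by
  rw [← boundary_symmDiff, symmDiff_comm, symmDiff_of_le h]

theorem Joined.exists_join (hloop : ∀ e, ¬ (ends e).IsDiag) {A : Set E} {a b : V}
    (h : Joined ends A a b) : ∃ P : Finset E, ↑P ⊆ A ∧ boundary ends P = {a} ∆ {b} := by
  induction h with
  | refl => exact ⟨∅, by simp, by simp [boundary, deg]⟩
  | @tail b c _ hbc ih =>
    obtain ⟨P, hPA, hP⟩ := ih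
    obtain ⟨e, hA, he⟩ := hbc
    refine ⟨P ∆ {e}, fun f hf => ?_, ?_⟩
    · rcases mem_symmDiff.mp hf with ⟨hf, -⟩ | ⟨hf, -⟩
      exacts [hPA hf, mem_singleton.mp hf ▸ hA]
    · rw [boundary_symmDiff, hP, boundary_singleton he (ne_of_ends_eq hloop he), symmDiff_assoc,
        symmDiff_symmDiff_cancel_left]

/-- The sum (mod 2) of paths from the vertices of `T` to `x`. -/
theorem exists_join (hloop : ∀ e, ¬ (ends e).IsDiag) {A : Set E} (x : V) (T : Finset V)
    (hT : ∀ t ∈ T, Joined ends A t x) :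
    ∃ F : Finset E, ↑F ⊆ A ∧ boundary ends F = ↑T ∆ (if Even #T then ∅ else {x}) := by
  induction T using Finset.induction_on with
  | empty => exact ⟨∅, by simp, by simp [boundary, deg]⟩
  | @insert t T ht ih =>
    obtain ⟨F, hFA, hF⟩ := ih fun s hs => hT s (mem_insert_of_mem hs)
    obtain ⟨P, hPA, hP⟩ := (hT t (mem_insert_self t T)).exists_join hloop
    refine ⟨F ∆ P, fun e he => ?_, ?_⟩
    · rcases mem_symmDiff.mp he with ⟨he, -⟩ | ⟨he, -⟩
      exacts [hFA he, hPA he]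
    · simp only [boundary_symmDiff, hF, hP, card_insert_of_notMem ht, Nat.even_add_one]
      ext v
      split_ifs <;> simp only [Set.mem_symmDiff, coe_insert, Set.mem_insert_iff, mem_coe,
        Set.mem_singleton_iff, Set.notMem_empty] <;> grind

theorem exists_isForest_of_exists {A : Set E} {B : Set V}
    (h : ∃ F : Finset E, ↑F ⊆ A ∧ boundary ends F = B) :
    ∃ F : Finset E, ↑F ⊆ A ∧ boundary ends F = B ∧ IsForest ends F := by
  obtain ⟨F, ⟨hFA, hFB⟩, hmin⟩ := wellFounded_lt.has_min _ h
  refine ⟨F, hFA, hFB, fun C hCF hC => ?_⟩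
  by_contra hne
  refine hmin (F \ C) ⟨fun e he => hFA (mem_sdiff.mp he).1, ?_⟩
    (sdiff_ssubset hCF (nonempty_iff_ne_empty.mpr hne))
  rw [boundary_sdiff hCF, hC, ← Set.bot_eq_empty, symmDiff_bot, hFB]

theorem IsForest.not_joined_erase (hloop : ∀ e, ¬ (ends e).IsDiag) {F : Finset E}
    (hF : IsForest ends F) {e : E} (he : e ∈ F) {a b : V} (hab : ends e = s(a, b)) :
    ¬ Joined ends ↑(F.erase e) a b := by
  intro h
  obtain ⟨P, hP, hPb⟩ := h.exists_join hloop
  have heP : e ∉ P := fun h => by simpa using hP h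
  have hcycle : insert e P = {e} ∆ P := by
    rw [(disjoint_singleton_left.mpr heP).symmDiff_eq_sup, insert_eq]
    rfl
  refine insert_ne_empty e P (hF _ (insert_subset he ((coe_subset.mp hP).trans (erase_subset e F)))
    ?_)
  rw [hcycle, boundary_symmDiff, hPb, boundary_singleton hab (ne_of_ends_eq hloop hab),
    symmDiff_self, Set.bot_eq_empty]

theorem IsForest.eq_of_ends_eq (hloop : ∀ e, ¬ (ends e).IsDiag) {F : Finset E}
    (hF : IsForest ends F) {e f : E} (he : e ∈ F) (hf : f ∈ F) (hef : ends e = ends f) : e = f := by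
  by_contra hne
  obtain ⟨⟨a, b⟩, hab⟩ := Quot.exists_rep (ends e)
  exact hF.not_joined_erase hloop he hab.symm
    (Relation.ReflTransGen.single ⟨f, mem_erase.mpr ⟨Ne.symm hne, hf⟩, hef ▸ hab.symm⟩)

theorem exists_star_coloring {S : Finset E} (hS : S.Nonempty) (o : Option (Fin 2)) :
    ∃ κ : E → Fin 2, ∀ i, OddOrZero (#{e ∈ S | κ e = i} + if o = some i then 1 else 0) := by
  obtain ⟨e₁, he₁⟩ := hS
  have hS : 1 ≤ #S := card_pos.mpr ⟨e₁, he₁⟩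
  have count (a b i : Fin 2) : #{e ∈ S | (if e = e₁ then a else b) = i} =
      (if a = i then 1 else 0) + (if b = i then #S - 1 else 0) := by
    conv_lhs => rw [← insert_erase he₁, filter_insert, if_pos rfl, filter_congr fun e he => by
      rw [if_neg (ne_of_mem_erase he)], filter_const]
    split_ifs <;> simp [card_erase_of_mem he₁, add_comm]
  -- `e₁` gets colour `a`, every other edge colour `b`
  obtain ⟨a, b, hab⟩ : ∃ a b : Fin 2, ∀ i, OddOrZero ((if a = i then 1 else 0) +
      (if b = i then #S - 1 else 0) + if o = some i then 1 else 0) := by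
    refine match o, Nat.mod_two_eq_zero_or_one #S with
      | none, .inl h => ⟨1, 0, fun i => ?_⟩
      | none, .inr h => ⟨0, 0, fun i => ?_⟩
      | some c, .inl h => ⟨c, c, fun i => ?_⟩
      | some c, .inr h => ⟨c + 1, c + 1, fun i => ?_⟩
    all_goals
      fin_cases i <;> try fin_cases c
      all_goals simp [OddOrZero, Nat.odd_iff]; try omega
  exact ⟨fun e => if e = e₁ then a else b, fun i => count a b i ▸ hab i⟩

theorem IsForest.pairwise_not_joined_passTokens (hloop : ∀ e, ¬ (ends e).IsDiag)
    {F : Finset E} (hF : IsForest ends F) {r : V} {τ : V → Option (Fin 2)}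
    (hτ : ∀ u v, u ≠ v → (τ u).isSome → (τ v).isSome → ¬ Joined ends F u v)
    (hr : ∀ v, v ≠ r → (τ v).isSome → ¬ Joined ends F v r) (κ : E → Fin 2) (u v : V)
    (huv : u ≠ v) (hu : (passTokens ends r {e ∈ F | r ∈ ends e} κ τ u).isSome)
    (hv : (passTokens ends r {e ∈ F | r ∈ ends e} κ τ v).isSome) :
    ¬ Joined ends ↑(F \ {e ∈ F | r ∈ ends e}) u v := by
  intro hjoin
  have hsub : (↑(F \ {e ∈ F | r ∈ ends e}) : Set E) ⊆ ↑F := coe_subset.mpr sdiff_subset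
  have mixed : ∀ u v, v ≠ r → (∃ e ∈ F, r ∈ ends e ∧ u ∈ ends e) → (τ v).isSome →
      ¬ Joined ends ↑(F \ {e ∈ F | r ∈ ends e}) u v := by
    rintro u v hvr ⟨e, he, hre, hue⟩ hv h
    exact hr v hvr hv ((h.mono hsub).symm.trans (joined_of_mem he hue hre))
  obtain ⟨hur, hu⟩ := isSome_passTokens hu
  obtain ⟨hvr, hv⟩ := isSome_passTokens hv
  simp only [mem_filter] at hu hv
  rcases hu with ⟨e, ⟨he, hre⟩, hue⟩ | hu <;> rcases hv with ⟨f, ⟨hf, hrf⟩, hvf⟩ | hv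
  · -- `u ~ v` away from `r`, then `v - r` by `f`, would join the ends of the edge `e = ur`
    have hends : ends e = s(u, r) := (Sym2.mem_and_mem_iff hur).mp ⟨hue, hre⟩
    have hfe : f ≠ e := by
      rintro rfl
      rcases Sym2.mem_iff.mp (hends ▸ hvf) with h | h
      exacts [huv h.symm, hvr h]
    have hsub' : (↑(F \ {e ∈ F | r ∈ ends e}) : Set E) ⊆ ↑(F.erase e) := coe_subset.mpr
      fun g hg => mem_erase.mpr ⟨fun h => (mem_sdiff.mp hg).2 (h ▸ mem_filter.mpr ⟨he, hre⟩),
        (mem_sdiff.mp hg).1⟩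
    exact hF.not_joined_erase hloop he hends
      ((hjoin.mono hsub').trans (joined_of_mem (mem_erase.mpr ⟨hfe, hf⟩) hvf hrf))
  · exact mixed u v hvr ⟨e, he, hre, hue⟩ hv hjoin
  · exact mixed v u hur ⟨f, hf, hrf, hvf⟩ hu hjoin.symm
  · exact hτ u v huv hu hv (hjoin.mono hsub)

theorem IsForest.deg_star_add_token (hloop : ∀ e, ¬ (ends e).IsDiag) {F : Finset E}
    (hF : IsForest ends F) {r : V} {τ : V → Option (Fin 2)}
    (hr : ∀ v, v ≠ r → (τ v).isSome → ¬ Joined ends F v r) (κ : E → Fin 2) {v : V} (hvr : v ≠ r)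
    (i : Fin 2) :
    deg ends {e ∈ {e ∈ F | r ∈ ends e} | κ e = i} v + (if τ v = some i then 1 else 0) =
      if passTokens ends r {e ∈ F | r ∈ ends e} κ τ v = some i then 1 else 0 := by
  rw [deg, filter_comm]
  by_cases hnb : ∃ e ∈ {e ∈ F | r ∈ ends e}, v ∈ ends e
  · obtain ⟨e, he, hve⟩ := hnb
    obtain ⟨heF, hre⟩ := mem_filter.mp he
    have hends : ends e = s(v, r) := (Sym2.mem_and_mem_iff hvr).mp ⟨hve, hre⟩
    have hstar : {f ∈ {e ∈ F | r ∈ ends e} | v ∈ ends f} = {e} := by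
      refine eq_singleton_iff_unique_mem.mpr ⟨mem_filter.mpr ⟨he, hve⟩, fun f hf => ?_⟩
      simp only [mem_filter] at hf
      exact hF.eq_of_ends_eq hloop hf.1.1 heF
        (((Sym2.mem_and_mem_iff hvr).mp ⟨hf.2, hf.1.2⟩).trans hends.symm)
    have hτv : τ v = none := Option.not_isSome_iff_eq_none.mp fun h =>
      hr v hvr h (joined_of_mem heF hve hre)
    have hpass : passTokens ends r {e ∈ F | r ∈ ends e} κ τ v = some (κ e) := by
      have hex : ∃ e ∈ {e ∈ F | r ∈ ends e}, v ∈ ends e := ⟨e, he, hve⟩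
      rw [passTokens, if_neg hvr, dif_pos hex]
      exact congrArg (some ∘ κ) (mem_singleton.mp (hstar ▸ mem_filter.mpr hex.choose_spec))
    rw [hstar, hτv, hpass, filter_singleton]
    by_cases hi : κ e = i <;> simp [hi]
  · have hpass : passTokens ends r {e ∈ F | r ∈ ends e} κ τ v = τ v := by
      rw [passTokens, if_neg hvr, dif_neg hnb]
    rw [hpass, filter_eq_empty_iff.mpr fun f hf hvf => hnb ⟨f, hf, hvf⟩]
    simp

/-- `τ v = some i` stands for one extra edge of colour `i` at `v`, outside `F`. -/
theorem IsForest.exists_oddColoring_of_tokens (hloop : ∀ e, ¬ (ends e).IsDiag) {F : Finset E}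
    (hF : IsForest ends F) (τ : V → Option (Fin 2))
    (hτ : ∀ u v, u ≠ v → (τ u).isSome → (τ v).isSome → ¬ Joined ends F u v) :
    ∃ ψ : E → Fin 2, ∀ v i,
      OddOrZero (deg ends {e ∈ F | ψ e = i} v + if τ v = some i then 1 else 0) := by
  induction F using Finset.strongInduction generalizing τ with
  | H F ih =>
  rcases F.eq_empty_or_nonempty with rfl | hne
  · refine ⟨0, fun v i => ?_⟩
    split_ifs <;> simp [deg, OddOrZero]
  obtain ⟨r, ⟨e, heF, hre⟩, hr⟩ := exists_root hne τ hτ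
  set S : Finset E := {e ∈ F | r ∈ ends e}
  have hSF : S ⊆ F := filter_subset _ _
  have heS : e ∈ S := mem_filter.mpr ⟨heF, hre⟩
  obtain ⟨κ, hκ⟩ := exists_star_coloring ⟨e, heS⟩ (τ r)
  obtain ⟨ψ, hψ⟩ := ih (F \ S) (sdiff_ssubset hSF ⟨e, heS⟩) (hF.mono sdiff_subset)
    (passTokens ends r S κ τ) (hF.pairwise_not_joined_passTokens hloop hτ hr κ)
  refine ⟨S.piecewise κ ψ, fun v i => ?_⟩
  rw [filter_piecewise hSF, deg_union (disjoint_filter_filter disjoint_sdiff)]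
  by_cases hvr : v = r
  · subst hvr
    have hrest : deg ends {e ∈ F \ S | ψ e = i} v = 0 :=
      card_eq_zero.mpr (filter_eq_empty_iff.mpr fun f hf hvf => by
        simp only [mem_filter, mem_sdiff] at hf
        exact hf.1.2 (mem_filter.mpr ⟨hf.1.1, hvf⟩))
    have hstar : deg ends {e ∈ S | κ e = i} v = #{e ∈ S | κ e = i} :=
      congrArg card (filter_true_of_mem fun f hf => (mem_filter.mp (mem_filter.mp hf).1).2)
    rw [hrest, add_zero, hstar]
    exact hκ i
  · rw [add_right_comm, hF.deg_star_add_token hloop hr κ hvr, add_comm]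
    exact hψ v i

theorem IsForest.exists_oddColoring (hloop : ∀ e, ¬ (ends e).IsDiag) {F : Finset E}
    (hF : IsForest ends F) : ∃ ψ : E → Fin 2, IsOddColoring ends F ψ := by
  obtain ⟨ψ, hψ⟩ := hF.exists_oddColoring_of_tokens hloop (fun _ => none) (by simp)
  exact ⟨ψ, fun v i => by simpa using hψ v i⟩

theorem oddOrZero_deg_sdiff {F X : Finset E} (hFX : F ⊆ X) {v : V}
    (h : Odd (deg ends F v) ↔ deg ends X v ≠ 0 ∧ Even (deg ends X v)) :
    OddOrZero (deg ends (X \ F) v) := by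
  rw [deg_sdiff hFX, OddOrZero]
  by_cases h0 : deg ends X v = 0
  · exact Or.inl (by omega)
  · refine Or.inr ((Nat.odd_sub (deg_mono hFX v)).mpr ?_)
    rw [← Nat.not_even_iff_odd, ← Nat.not_odd_iff_even (n := deg ends F v), h]
    tauto

theorem exists_oddColoring_of_pendant [Fintype V] (hloop : ∀ e, ¬ (ends e).IsDiag)
    {X : Finset E} {t : V} (ht : deg ends X t = 1)
    (hX : ∀ u, deg ends X u ≠ 0 → Joined ends X u t) :
    ∃ φ : E → Fin 3, IsOddColoring ends X φ := by
  set T : Finset V := {v | deg ends X v ≠ 0 ∧ Even (deg ends X v)}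
  obtain ⟨F, hFX, hF, hforest⟩ := exists_isForest_of_exists
    (exists_join hloop t T fun v hv => hX v (mem_filter.mp hv).2.1)
  obtain ⟨ψ, hψ⟩ := hforest.exists_oddColoring hloop
  replace hFX : F ⊆ X := coe_subset.mp hFX
  refine ⟨fun e => if e ∈ F then (ψ e).succ else 0, fun v c => ?_⟩
  cases c using Fin.cases with
  | zero =>
    have hclass : {e ∈ X | (if e ∈ F then (ψ e).succ else 0) = 0} = X \ F := by
      ext e
      by_cases he : e ∈ F <;> simp [he]
    rw [hclass]
    by_cases hvt : v = t
    · have := (deg_mono (sdiff_subset : X \ F ⊆ X) v).trans_eq (hvt ▸ ht)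
      interval_cases h : deg ends (X \ F) v
      exacts [Or.inl rfl, Or.inr odd_one]
    · refine oddOrZero_deg_sdiff hFX ?_
      have hv := congrArg (v ∈ ·) hF
      simp only [boundary, Set.mem_ofPred, Set.mem_symmDiff, mem_coe, T, mem_filter, mem_univ,
        true_and] at hv
      split_ifs at hv <;> simpa [hvt] using hv
  | succ i =>
    have hclass : {e ∈ X | (if e ∈ F then (ψ e).succ else 0) = i.succ} = {e ∈ F | ψ e = i} := by
      ext e
      by_cases he : e ∈ F
      · simp [he, hFX he]
      · simp [he, (Fin.succ_ne_zero i).symm]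
    rw [hclass]
    exact hψ v i


theorem exists_oddColoring_side [Fintype V] [Fintype E] (hloop : ∀ e, ¬ (ends e).IsDiag)
    {e₀ : E} {p q : V} (he₀ : ends e₀ = s(p, q)) (hpq : ¬ Joined ends {e | e ≠ e₀} p q) :
    ∃ φ : E → Fin 3, IsOddColoring ends (side ends e₀ p) φ :=
  exists_oddColoring_of_pendant hloop (deg_side_eq_one he₀ hpq) (joined_side_of_deg_ne_zero he₀ hpq)

theorem exists_oddColoring_of_bridge [Fintype V] [Fintype E] (hloop : ∀ e, ¬ (ends e).IsDiag)
    (hconn : ∀ u v, Joined ends Set.univ u v) {e₀ : E} {p q : V} (he₀ : ends e₀ = s(p, q))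
    (hpq : ¬ Joined ends {e | e ≠ e₀} p q) :
    ∃ φ : E → Fin 3, IsOddColoring ends univ φ := by
  obtain ⟨φp, hφp⟩ := exists_oddColoring_side hloop he₀ hpq
  obtain ⟨φq, hφq⟩ := exists_oddColoring_side hloop (he₀.trans Sym2.eq_swap) (hpq ·.symm)
  let σ := Equiv.swap (φq e₀) (φp e₀)
  refine ⟨fun e => if e ∈ side ends e₀ p then φp e else σ (φq e), fun v => ?_⟩
  by_cases hvp : Joined ends {e | e ≠ e₀} v p
  · refine oddOrZero_deg_of_agree (Equiv.refl _) (hφp v) (fun e hv => ?_) (fun e he _ => ?_)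
    · simpa using mem_side.mpr ⟨v, hv, hvp⟩
    · simp [he]
  · have hvq := (joined_or_joined_of_connected hconn he₀ v).resolve_left hvp
    refine oddOrZero_deg_of_agree σ (hφq v) (fun e hv => ?_) (fun e _ hv => ?_)
    · simpa using mem_side.mpr ⟨v, hv, hvq⟩
    · split_ifs with hep
      · rw [eq_of_mem_side hep hv hvp, Equiv.swap_apply_left]
      · rfl

end Degrees

end OddEdgeColoring

open OddEdgeColoring

theorem stmt_3_general {V E : Type*} [Fintype V] [Fintype E]
    (ends : E → Sym2 V)
    (hloopless : ∀ e, ¬ (ends e).IsDiag)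
    (hconn : ∀ u v : V,
      Relation.ReflTransGen (fun a b => ∃ e, ends e = s(a, b)) u v)
    (hbridge : ∃ e₀ : E, ¬ ∀ u v : V,
      Relation.ReflTransGen (fun a b => ∃ e, e ≠ e₀ ∧ ends e = s(a, b)) u v) :
    ∃ φ : E → Fin 3, ∀ (v : V) (j : Fin 3),
      {e | φ e = j ∧ v ∈ ends e}.ncard = 0 ∨
        Odd {e | φ e = j ∧ v ∈ ends e}.ncard := by
  classical
  obtain ⟨e₀, hbridge⟩ := hbridge
  obtain ⟨⟨p, q⟩, he₀⟩ := Quot.exists_rep (ends e₀)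
  have hconn : ∀ u v, Joined ends Set.univ u v := fun u v =>
    Relation.ReflTransGen.mono (fun _ _ ⟨e, he⟩ => ⟨e, trivial, he⟩) _ _ (hconn u v)
  obtain ⟨φ, hφ⟩ := exists_oddColoring_of_bridge hloopless hconn he₀.symm
    (not_joined_of_not_connected hconn he₀.symm hbridge)
  refine ⟨φ, fun v j => ?_⟩
  have hset : {e | φ e = j ∧ v ∈ ends e} =
      (↑{e ∈ {e ∈ (univ : Finset E) | φ e = j} | v ∈ ends e} : Set E) := by
    ext
    simp
  rw [hset, Set.ncard_coe_finset]
  exact hφ v j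

/-- If `G` is a connected loopless multigraph containing a bridge (an edge whose
removal disconnects the graph), then `G` admits an odd 3-edge-coloring. -/
theorem stmt_3 {V E : Type*} [Fintype V] [Fintype E] [Nonempty V]
    (ends : E → Sym2 V)
    (hloopless : ∀ e, ¬ (ends e).IsDiag)
    (hconn : ∀ u v : V,
      Relation.ReflTransGen (fun a b => ∃ e, ends e = s(a, b)) u v)
    (hbridge : ∃ e₀ : E, ¬ ∀ u v : V,
      Relation.ReflTransGen (fun a b => ∃ e, e ≠ e₀ ∧ ends e = s(a, b)) u v) :
    ∃ φ : E → Fin 3, ∀ (v : V) (j : Fin 3),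
      {e | φ e = j ∧ v ∈ ends e}.ncard = 0 ∨
        Odd {e | φ e = j ∧ v ∈ ends e}.ncard :=
  stmt_3_general ends hloopless hconn hbridge
end

section
/- Let G be a connected graph and T ⊆ V(G) a subset of even cardinality. Then there exists a spanning subgraph H of G such that every vertex of T has odd degree in H, every vertex not in T has even degree in H, and H is a forest. Moreover, such an H can also be chosen so that its edge-complement G \ E(H) is a forest. -/
/-!
Work with edge parities in `ZMod 2`. A path from `r` to `v` changes the parity of the
incidence count exactly at `r` and `v`, so the symmetric difference of paths from a root `r`
to all vertices of `T` has odd incidence exactly on `T` when `#T` is even. Building it inside a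
spanning tree gives a forest `T`-join. For the coforest, let `O` be the odd-degree vertices
of `G` (`#O` is even by handshaking) and take a forest `(T ∆ O)`-join `J`: then `E(G) \ J`
is a `T`-join whose complement `J` is acyclic.
-/

open Finset
open scoped symmDiff

lemma ZMod.natCast_card_symmDiff {α : Type*} [DecidableEq α] (A B : Finset α) :
    ((#(A ∆ B) : ℕ) : ZMod 2) = #A + #B := by
  have hsub : A ∩ B ⊆ A ∪ B := inter_subset_left.trans subset_union_left
  have h : #(A ∆ B) + 2 * #(A ∩ B) = #A + #B := by
    rw [symmDiff_eq_sup_sdiff_inf, sup_eq_union, inf_eq_inter, card_sdiff_of_subset hsub,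
      ← card_union_add_card_inter A B]
    have := card_le_card hsub
    omega
  have h2 : (2 : ZMod 2) = 0 := rfl
  simpa [h2] using congrArg (Nat.cast : ℕ → ZMod 2) h

lemma ZMod.ite_mem_symmDiff {α : Type*} [DecidableEq α] (A B : Finset α) (x : α) :
    (if x ∈ A ∆ B then 1 else 0 : ZMod 2) =
      (if x ∈ A then 1 else 0) + if x ∈ B then 1 else 0 := by
  by_cases hA : x ∈ A <;> by_cases hB : x ∈ B <;> simp [mem_symmDiff, hA, hB]
  decide

namespace SimpleGraph

variable {V : Type*} [DecidableEq V]

def incidenceParity (S : Finset (Sym2 V)) (x : V) : ZMod 2 := #{e ∈ S | x ∈ e}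

def IsTJoin (T : Finset V) (S : Set (Sym2 V)) : Prop :=
  ∀ v, Odd {e | e ∈ S ∧ v ∈ e}.ncard ↔ v ∈ T

lemma isTJoin_coe_iff {T : Finset V} {S : Finset (Sym2 V)} :
    IsTJoin T S ↔ ∀ x, incidenceParity S x = if x ∈ T then 1 else 0 := by
  refine forall_congr' fun x => ?_
  have : {e | e ∈ (S : Set (Sym2 V)) ∧ x ∈ e} = ↑{e ∈ S | x ∈ e} := by ext; simp
  rw [this, Set.ncard_coe_finset, incidenceParity]
  split_ifs with hx
  · simp [hx, ZMod.natCast_eq_one_iff_odd]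
  · simp [hx, ZMod.natCast_eq_zero_iff_even]

lemma incidenceParity_symmDiff (S S' : Finset (Sym2 V)) (x : V) :
    incidenceParity (S ∆ S') x = incidenceParity S x + incidenceParity S' x := by
  have : {e ∈ S ∆ S' | x ∈ e} = {e ∈ S | x ∈ e} ∆ {e ∈ S' | x ∈ e} := by
    ext; simp only [mem_filter, mem_symmDiff]; tauto
  rw [incidenceParity, this, ZMod.natCast_card_symmDiff, incidenceParity, incidenceParity]

lemma Walk.natCast_countP_edges_mem {G : SimpleGraph V} {u v : V} (p : G.Walk u v) (x : V) :
    ((p.edges.countP (x ∈ ·) : ℕ) : ZMod 2) =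
      (if x = u then 1 else 0) + if x = v then 1 else 0 := by
  induction p with
  | @nil w => by_cases hx : x = w <;> simp [hx]; decide
  | @cons a b c h q ih =>
    simp only [Walk.edges_cons, List.countP_cons, Nat.cast_add, ih]
    by_cases hxa : x = a
    · subst hxa; simp [h.ne]; ring
    by_cases hxb : x = b
    · subst hxb; simp [hxa]; ring_nf; reduce_mod_char
    · simp [hxa, hxb]

lemma Walk.IsTrail.incidenceParity_edges_toFinset {G : SimpleGraph V} {u v : V} {p : G.Walk u v}
    (hp : p.IsTrail) (x : V) :
    incidenceParity p.edges.toFinset x = (if x = u then 1 else 0) + if x = v then 1 else 0 := by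
  have : {e ∈ p.edges.toFinset | x ∈ e} = (p.edges.filter (x ∈ ·)).toFinset := by ext; simp
  rw [incidenceParity, this, List.toFinset_card_of_nodup (hp.edges_nodup.filter _),
    ← List.countP_eq_length_filter, p.natCast_countP_edges_mem]

variable {G : SimpleGraph V}

lemma Connected.exists_incidenceParity_eq (hG : G.Connected) (r : V) (T : Finset V) :
    ∃ S : Finset (Sym2 V), ↑S ⊆ G.edgeSet ∧
      ∀ x, incidenceParity S x =
        (if x ∈ T then 1 else 0) + if x = r then (#T : ZMod 2) else 0 := by
  induction T using Finset.induction_on with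
  | empty => exact ⟨∅, by simp, fun x => by simp [incidenceParity]⟩
  | @insert v T hv ih =>
    obtain ⟨S, hSG, hS⟩ := ih
    let P : G.Path r v := (hG.preconnected r v).some.toPath
    refine ⟨S ∆ P.1.edges.toFinset, ?_, fun x => ?_⟩
    · refine (Finset.coe_subset.mpr symmDiff_le_sup).trans ?_
      simp only [sup_eq_union, coe_union, List.coe_toFinset, Set.union_subset_iff]
      exact ⟨hSG, P.1.edges_subset_edgeSet⟩
    · rw [incidenceParity_symmDiff, hS, P.2.isTrail.incidenceParity_edges_toFinset,
        card_insert_of_notMem hv]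
      by_cases hxv : x = v <;> by_cases hxr : x = r
      · subst hxv hxr; simp [hv]; ring_nf
      · subst hxv; simp [hv, hxr]
      · subst hxr; simp [hxv]; ring
      · simp [hxv, hxr]

lemma Connected.exists_isTJoin (hG : G.Connected) {T : Finset V} (hT : Even #T) :
    ∃ S : Finset (Sym2 V), ↑S ⊆ G.edgeSet ∧ IsTJoin T S := by
  obtain ⟨r⟩ := hG.nonempty
  obtain ⟨S, hSG, hS⟩ := hG.exists_incidenceParity_eq r T
  refine ⟨S, hSG, isTJoin_coe_iff.mpr fun x => ?_⟩
  simp [hS, ZMod.natCast_eq_zero_iff_even.mpr hT]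

lemma Connected.exists_isTJoin_isAcyclic (hG : G.Connected) {T : Finset V} (hT : Even #T) :
    ∃ S : Finset (Sym2 V), ↑S ⊆ G.edgeSet ∧ IsTJoin T S ∧
      (fromEdgeSet (S : Set (Sym2 V))).IsAcyclic := by
  obtain ⟨F, hFG, hF⟩ := hG.exists_isTree_le
  obtain ⟨S, hSF, hS⟩ := hF.connected.exists_isTJoin hT
  refine ⟨S, hSF.trans (edgeSet_mono hFG), hS, hF.isAcyclic.anti ?_⟩
  rw [fromEdgeSet_le]
  exact Set.sdiff_subset.trans hSF

lemma isTJoin_edgeSet [Fintype V] [DecidableRel G.Adj] :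
    IsTJoin {v | Odd (G.degree v)} G.edgeSet := by
  intro v
  change Odd (G.incidenceSet v).ncard ↔ _
  rw [Set.ncard_eq_toFinset_card', Set.toFinset_card, card_incidenceSet_eq_degree]
  simp

lemma Connected.exists_isTJoin_isAcyclic_deleteEdges [Fintype V] [DecidableRel G.Adj]
    (hG : G.Connected) {T : Finset V} (hT : Even #T) :
    ∃ S : Set (Sym2 V), S ⊆ G.edgeSet ∧ IsTJoin T S ∧ (G.deleteEdges S).IsAcyclic := by
  set O : Finset V := {v | Odd (G.degree v)}
  have hTO : Even #(T ∆ O) := by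
    rw [← ZMod.natCast_eq_zero_iff_even, ZMod.natCast_card_symmDiff,
      ZMod.natCast_eq_zero_iff_even.mpr hT,
      ZMod.natCast_eq_zero_iff_even.mpr G.even_card_odd_degree_vertices, add_zero]
  obtain ⟨J, hJG, hJ, hJacyc⟩ := hG.exists_isTJoin_isAcyclic hTO
  have hJE : J ⊆ G.edgeFinset := by rwa [← coe_subset, coe_edgeFinset]
  refine ⟨↑(G.edgeFinset \ J), by simp, ?_, hJacyc.anti ?_⟩
  · have hE := isTJoin_coe_iff.mp (coe_edgeFinset G ▸ G.isTJoin_edgeSet)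
    rw [isTJoin_coe_iff] at hJ ⊢
    intro x
    rw [← symmDiff_of_le hJE, incidenceParity_symmDiff, hJ, hE, ZMod.ite_mem_symmDiff, add_assoc,
      CharTwo.add_self_eq_zero, add_zero]
  · intro a b hab
    have hGab : G.Adj a b := deleteEdges_le _ hab
    simp_all [hGab.ne]

end SimpleGraph

/-- In a connected graph `G`, for any even-sized `T ⊆ V(G)` there is a `T`-join that is
a forest, and also one that is a coforest (its edge-complement in `G` is acyclic). -/
theorem stmt_4 {V : Type*} [Fintype V] [DecidableEq V] (G : SimpleGraph V)
    (hG : G.Connected) (T : Finset V) (hT : Even T.card) :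
    (∃ S : Set (Sym2 V), S ⊆ G.edgeSet ∧
      (∀ v : V, Odd {e | e ∈ S ∧ v ∈ e}.ncard ↔ v ∈ T) ∧
      (SimpleGraph.fromEdgeSet S).IsAcyclic) ∧
    (∃ S : Set (Sym2 V), S ⊆ G.edgeSet ∧
      (∀ v : V, Odd {e | e ∈ S ∧ v ∈ e}.ncard ↔ v ∈ T) ∧
      (G.deleteEdges S).IsAcyclic) := by
  classical
  obtain ⟨S, hSG, hS, hSacyc⟩ := hG.exists_isTJoin_isAcyclic hT
  exact ⟨⟨S, hSG, hS, hSacyc⟩, hG.exists_isTJoin_isAcyclic_deleteEdges hT⟩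
end

section
/- Let G be the multigraph on 2ℓ+1 vertices (ℓ ≥ 2) in which every pair of distinct vertices is joined by exactly two parallel edges. Then for any edge e of G, the graph G \ {e} admits an odd 3-edge-coloring. -/
open Finset

/-- Let `G` be the multigraph on `2ℓ+1` vertices (`ℓ ≥ 2`) in which every pair of
distinct vertices is joined by exactly two parallel edges. Then for any edge `e₀`,
the graph `G \ {e₀}` admits an odd 3-edge-coloring. -/
theorem stmt_9 {V E : Type*} [Fintype V] [Fintype E]
    (ends : E → Sym2 V)
    (hloopless : ∀ e, ¬ (ends e).IsDiag)
    (ℓ : ℕ) (hℓ : 2 ≤ ℓ)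
    (hcard : Fintype.card V = 2 * ℓ + 1)
    (hdouble : ∀ u w : V, u ≠ w → {e | ends e = s(u, w)}.ncard = 2) :
    ∀ e₀ : E, ∃ φ : E → Fin 3, ∀ (u : V) (j : Fin 3),
      {e | e ≠ e₀ ∧ φ e = j ∧ u ∈ ends e}.ncard = 0 ∨
        Odd {e | e ≠ e₀ ∧ φ e = j ∧ u ∈ ends e}.ncard := by
  classical
  intro e₀
  have hset : ∀ (P : E → Prop) (inst : DecidablePred P),
      {e | P e}.ncard = (@Finset.filter E P inst univ).card := by
    intro P inst
    rw [← Set.ncard_coe_finset]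
    congr 1
    ext e
    simp
  obtain ⟨a, b, hab'⟩ : ∃ a b, ends e₀ = s(a, b) :=
    Sym2.inductionOn (ends e₀) (fun x y => ⟨x, y, rfl⟩)
  have hne : a ≠ b := by
    intro h
    exact hloopless e₀ (by rw [hab', h]; exact Sym2.mk_isDiag_iff.mpr rfl)
  have hba : b ≠ a := Ne.symm hne
  have hbu : b ∈ (univ : Finset V).erase a := mem_erase.mpr ⟨hba, mem_univ b⟩
  have hT : 3 ≤ (((univ : Finset V).erase a).erase b).card := by
    rw [card_erase_of_mem hbu, card_erase_of_mem (mem_univ a), card_univ, hcard]; omega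
  obtain ⟨c, hc⟩ := card_pos.mp
    (show 0 < (((univ : Finset V).erase a).erase b).card by omega)
  have hcb : c ≠ b := (mem_erase.mp hc).1
  have hca : c ≠ a := (mem_erase.mp (mem_erase.mp hc).2).1
  obtain ⟨d, hd⟩ := card_pos.mp
    (show 0 < ((((univ : Finset V).erase a).erase b).erase c).card by
      rw [card_erase_of_mem hc]; omega)
  have hdc : d ≠ c := (mem_erase.mp hd).1
  have hdb : d ≠ b := (mem_erase.mp (mem_erase.mp hd).2).1
  have hda : d ≠ a := (mem_erase.mp (mem_erase.mp (mem_erase.mp hd).2).2).1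
  have hac : a ≠ c := Ne.symm hca
  have hbc : b ≠ c := Ne.symm hcb
  have had : a ≠ d := Ne.symm hda
  have hbd : b ≠ d := Ne.symm hdb
  have hcd : c ≠ d := Ne.symm hdc
  have hfib : ∀ u w : V, u ≠ w → (univ.filter (fun e => ends e = s(u, w))).card = 2 := by
    intro u w huw
    rw [← hset]
    exact hdouble u w huw
  have hex : ∀ u w : V, u ≠ w → ∃ e, ends e = s(u, w) := by
    intro u w huw
    obtain ⟨e, he⟩ := card_pos.mp (show 0 < (univ.filter (fun e => ends e = s(u, w))).card by
      rw [hfib u w huw]; omega)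
    exact ⟨e, (mem_filter.mp he).2⟩
  obtain ⟨selp, hselpdef⟩ : ∃ f : Sym2 V → E,
      ∀ p, f p = if h : ∃ e, ends e = p then h.choose else e₀ := ⟨_, fun _ => rfl⟩
  have hselp : ∀ p, (∃ e, ends e = p) → ends (selp p) = p := by
    intro p hp
    rw [hselpdef, dif_pos hp]
    exact hp.choose_spec
  obtain ⟨φ, hφdef⟩ : ∃ φ : E → Fin 3, ∀ e, φ e =
      (if ends e = s(a, d) then (if e = selp (ends e) then 2 else 0)
      else if ends e = s(b, c) then (if e = selp (ends e) then 2 else 1)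
      else if ends e = s(b, d) then 0
      else if ends e = s(c, d) then 2
      else if a ∈ ends e then 1
      else if c ∈ ends e then 1
      else if d ∈ ends e then 0
      else if b ∈ ends e then (if e = selp (ends e) then 0 else 1)
      else 1) := ⟨_, fun _ => rfl⟩
  refine ⟨φ, ?_⟩
  have key : ∀ (u : V) (j : Fin 3),
      {e | e ≠ e₀ ∧ φ e = j ∧ u ∈ ends e}.ncard
        = ∑ w ∈ univ.erase u,
            (univ.filter (fun e => (e ≠ e₀ ∧ φ e = j) ∧ ends e = s(u, w))).card := by
    intro u j
    rw [hset (fun e => e ≠ e₀ ∧ φ e = j ∧ u ∈ ends e) inferInstance]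
    have H : ∀ e ∈ univ.filter (fun e => e ≠ e₀ ∧ φ e = j ∧ u ∈ ends e),
        (if h : u ∈ ends e then Sym2.Mem.other h else u) ∈ univ.erase u := by
      intro e he
      rw [mem_filter] at he
      obtain ⟨-, -, -, hu⟩ := he
      rw [dif_pos hu, mem_erase]
      exact ⟨Sym2.other_ne (hloopless e) hu, mem_univ _⟩
    refine (Finset.card_eq_sum_card_fiberwise H).trans ?_
    refine Finset.sum_congr rfl fun w hw => ?_
    congr 1
    ext e
    simp only [mem_filter, mem_univ, true_and]
    constructor
    · rintro ⟨⟨hne', hj, hu⟩, hfw⟩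
      rw [dif_pos hu] at hfw
      refine ⟨⟨hne', hj⟩, ?_⟩
      rw [← Sym2.other_spec hu, hfw]
    · rintro ⟨⟨hne', hj⟩, hew⟩
      have hu : u ∈ ends e := by rw [hew]; exact Sym2.mem_mk_left u w
      refine ⟨⟨hne', hj, hu⟩, ?_⟩
      rw [dif_pos hu]
      exact Sym2.congr_right.mp ((Sym2.other_spec hu).trans hew)
  have h0ne : ∀ x y : V, ¬(a = x ∧ b = y) → ¬(a = y ∧ b = x) → ends e₀ ≠ s(x, y) := by
    intro x y h1 h2 h
    rw [hab'] at h
    rcases Sym2.eq_iff.mp h with h | h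
    exacts [h1 h, h2 h]
  have hterm2 : ∀ (p : Sym2 V) (k j : Fin 3),
      (univ.filter (fun e => ends e = p)).card = 2 → ends e₀ ≠ p →
      (∀ e, ends e = p → φ e = k) →
      (univ.filter (fun e => (e ≠ e₀ ∧ φ e = j) ∧ ends e = p)).card
        = if j = k then 2 else 0 := by
    intro p k j h2 h0 hval
    by_cases hjk : j = k
    · rw [if_pos hjk, ← h2]
      congr 1
      ext e
      simp only [mem_filter, mem_univ, true_and]
      constructor
      · exact fun h => h.2
      · intro he
        refine ⟨⟨?_, by rw [hjk]; exact hval e he⟩, he⟩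
        intro h
        subst h
        exact h0 he
    · rw [if_neg hjk, card_eq_zero, filter_eq_empty_iff]
      rintro e - ⟨⟨-, hj⟩, he⟩
      exact hjk (hj.symm.trans (hval e he))
  have hterm1 : ∀ (p : Sym2 V) (k₁ k₂ j : Fin 3),
      (univ.filter (fun e => ends e = p)).card = 2 → ends e₀ ≠ p →
      (∀ e, ends e = p → φ e = if e = selp (ends e) then k₁ else k₂) → k₁ ≠ k₂ →
      (univ.filter (fun e => (e ≠ e₀ ∧ φ e = j) ∧ ends e = p)).card
        = if j = k₁ then 1 else if j = k₂ then 1 else 0 := by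
    intro p k₁ k₂ j h2 h0 hval hkk
    have hpex : ∃ e, ends e = p := by
      obtain ⟨e, he⟩ := card_pos.mp (show 0 < (univ.filter (fun e => ends e = p)).card by
        rw [h2]; omega)
      exact ⟨e, (mem_filter.mp he).2⟩
    have hx : ends (selp p) = p := hselp p hpex
    have hCx : selp p = selp (ends (selp p)) := by rw [hx]
    by_cases hj1 : j = k₁
    · rw [if_pos hj1]
      have hone : univ.filter (fun e => (e ≠ e₀ ∧ φ e = j) ∧ ends e = p) = {selp p} := by
        ext e
        simp only [mem_filter, mem_univ, true_and, mem_singleton]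
        constructor
        · rintro ⟨⟨-, hj⟩, he⟩
          by_cases hC : e = selp (ends e)
          · rw [he] at hC; exact hC
          · rw [hval e he, if_neg hC] at hj
            exact absurd (hj.trans hj1).symm hkk
        · rintro rfl
          refine ⟨⟨?_, ?_⟩, hx⟩
          · intro h
            rw [h] at hx
            exact h0 hx
          · rw [hj1, hval _ hx, if_pos hCx]
      rw [hone, card_singleton]
    · by_cases hj2 : j = k₂
      · rw [if_neg hj1, if_pos hj2]
        have hxmem : selp p ∈ univ.filter (fun e => ends e = p) :=
          mem_filter.mpr ⟨mem_univ _, hx⟩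
        have hrest : univ.filter (fun e => (e ≠ e₀ ∧ φ e = j) ∧ ends e = p)
            = (univ.filter (fun e => ends e = p)).erase (selp p) := by
          ext e
          simp only [mem_filter, mem_univ, true_and, mem_erase]
          constructor
          · rintro ⟨⟨-, hj⟩, he⟩
            refine ⟨?_, he⟩
            intro hexx
            have hC : e = selp (ends e) := by rw [he, ← hexx]
            rw [hval e he, if_pos hC] at hj
            exact hkk (hj.trans hj2)
          · rintro ⟨hne', he⟩
            have hC : ¬(e = selp (ends e)) := by rw [he]; exact hne'
            refine ⟨⟨?_, ?_⟩, he⟩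
            · intro h
              rw [h] at he
              exact h0 he
            · rw [hj2, hval e he, if_neg hC]
        rw [hrest, card_erase_of_mem hxmem, h2]
      · rw [if_neg hj1, if_neg hj2, card_eq_zero, filter_eq_empty_iff]
        rintro e - ⟨⟨-, hj⟩, he⟩
        rw [hval e he] at hj
        by_cases hC : e = selp (ends e)
        · rw [if_pos hC] at hj
          exact hj1 hj.symm
        · rw [if_neg hC] at hj
          exact hj2 hj.symm
  have htermab : ∀ (p : Sym2 V) (j : Fin 3), ends e₀ = p →
      (univ.filter (fun e => ends e = p)).card = 2 →
      (∀ e, ends e = p → φ e = 1) →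
      (univ.filter (fun e => (e ≠ e₀ ∧ φ e = j) ∧ ends e = p)).card
        = if j = 1 then 1 else 0 := by
    intro p j h0 h2 hval
    by_cases hj : j = 1
    · rw [if_pos hj]
      have hrest : univ.filter (fun e => (e ≠ e₀ ∧ φ e = j) ∧ ends e = p)
          = (univ.filter (fun e => ends e = p)).erase e₀ := by
        ext e
        simp only [mem_filter, mem_univ, true_and, mem_erase]
        constructor
        · rintro ⟨⟨hne', -⟩, he⟩
          exact ⟨hne', he⟩
        · rintro ⟨hne', he⟩
          exact ⟨⟨hne', by rw [hj]; exact hval e he⟩, he⟩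
      rw [hrest, card_erase_of_mem (show e₀ ∈ univ.filter (fun e => ends e = p) from mem_filter.mpr ⟨mem_univ _, h0⟩), h2]
    · rw [if_neg hj, card_eq_zero, filter_eq_empty_iff]
      rintro e - ⟨⟨-, hjj⟩, he⟩
      exact hj (hjj.symm.trans (hval e he))
  have hφab : ∀ e, ends e = s(a, b) → φ e = 1 := by
    intro e he
    rw [hφdef e, he]
    simp [Sym2.eq_iff, Sym2.mem_iff, hne, hba, hca, hcb, hda, hdb, hdc, hac, hbc, had, hbd, hcd]
  have hφac : ∀ e, ends e = s(a, c) → φ e = 1 := by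
    intro e he
    rw [hφdef e, he]
    simp [Sym2.eq_iff, Sym2.mem_iff, hne, hba, hca, hcb, hda, hdb, hdc, hac, hbc, had, hbd, hcd]
  have hφad : ∀ e, ends e = s(a, d) → φ e = if e = selp (ends e) then 2 else 0 := by
    intro e he
    rw [hφdef e, he]
    simp [Sym2.eq_iff, Sym2.mem_iff, hne, hba, hca, hcb, hda, hdb, hdc, hac, hbc, had, hbd, hcd]
  have hφbc : ∀ e, ends e = s(b, c) → φ e = if e = selp (ends e) then 2 else 1 := by
    intro e he
    rw [hφdef e, he]
    simp [Sym2.eq_iff, Sym2.mem_iff, hne, hba, hca, hcb, hda, hdb, hdc, hac, hbc, had, hbd, hcd]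
  have hφbd : ∀ e, ends e = s(b, d) → φ e = 0 := by
    intro e he
    rw [hφdef e, he]
    simp [Sym2.eq_iff, Sym2.mem_iff, hne, hba, hca, hcb, hda, hdb, hdc, hac, hbc, had, hbd, hcd]
  have hφcd : ∀ e, ends e = s(c, d) → φ e = 2 := by
    intro e he
    rw [hφdef e, he]
    simp [Sym2.eq_iff, Sym2.mem_iff, hne, hba, hca, hcb, hda, hdb, hdc, hac, hbc, had, hbd, hcd]
  have hφav : ∀ v, v ≠ a → v ≠ b → v ≠ c → v ≠ d → ∀ e, ends e = s(a, v) → φ e = 1 := by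
    intro v hva hvb hvc hvd e he
    rw [hφdef e, he]
    simp [Sym2.eq_iff, Sym2.mem_iff, hne, hba, hca, hcb, hda, hdb, hdc, hac, hbc, had, hbd, hcd, hva, hvb, hvc, hvd,
      Ne.symm hva, Ne.symm hvb, Ne.symm hvc, Ne.symm hvd]
  have hφbv : ∀ v, v ≠ a → v ≠ b → v ≠ c → v ≠ d → ∀ e, ends e = s(b, v) →
      φ e = if e = selp (ends e) then 0 else 1 := by
    intro v hva hvb hvc hvd e he
    rw [hφdef e, he]
    simp [Sym2.eq_iff, Sym2.mem_iff, hne, hba, hca, hcb, hda, hdb, hdc, hac, hbc, had, hbd, hcd, hva, hvb, hvc, hvd,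
      Ne.symm hva, Ne.symm hvb, Ne.symm hvc, Ne.symm hvd]
  have hφcv : ∀ v, v ≠ a → v ≠ b → v ≠ c → v ≠ d → ∀ e, ends e = s(c, v) → φ e = 1 := by
    intro v hva hvb hvc hvd e he
    rw [hφdef e, he]
    simp [Sym2.eq_iff, Sym2.mem_iff, hne, hba, hca, hcb, hda, hdb, hdc, hac, hbc, had, hbd, hcd, hva, hvb, hvc, hvd,
      Ne.symm hva, Ne.symm hvb, Ne.symm hvc, Ne.symm hvd]
  have hφdv : ∀ v, v ≠ a → v ≠ b → v ≠ c → v ≠ d → ∀ e, ends e = s(d, v) → φ e = 0 := by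
    intro v hva hvb hvc hvd e he
    rw [hφdef e, he]
    simp [Sym2.eq_iff, Sym2.mem_iff, hne, hba, hca, hcb, hda, hdb, hdc, hac, hbc, had, hbd, hcd, hva, hvb, hvc, hvd,
      Ne.symm hva, Ne.symm hvb, Ne.symm hvc, Ne.symm hvd]
  have hφvv : ∀ v v', v ≠ a → v ≠ b → v ≠ c → v ≠ d → v' ≠ a → v' ≠ b → v' ≠ c → v' ≠ d →
      ∀ e, ends e = s(v, v') → φ e = 1 := by
    intro v v' hva hvb hvc hvd hwa hwb hwc hwd e he
    rw [hφdef e, he]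
    simp [Sym2.eq_iff, Sym2.mem_iff, hne, hba, hca, hcb, hda, hdb, hdc, hac, hbc, had, hbd, hcd, hva, hvb, hvc, hvd, hwa, hwb, hwc, hwd,
      Ne.symm hva, Ne.symm hvb, Ne.symm hvc, Ne.symm hvd,
      Ne.symm hwa, Ne.symm hwb, Ne.symm hwc, Ne.symm hwd]
  obtain ⟨W, hWdef⟩ : ∃ W : Finset V,
      W = ((((univ : Finset V).erase a).erase b).erase c).erase d := ⟨_, rfl⟩
  have hWcard : W.card = 2 * ℓ - 3 := by
    rw [hWdef, card_erase_of_mem hd, card_erase_of_mem hc, card_erase_of_mem hbu,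
      card_erase_of_mem (mem_univ a), card_univ, hcard]
    omega
  have hWmem : ∀ w ∈ W, w ≠ a ∧ w ≠ b ∧ w ≠ c ∧ w ≠ d := by
    intro w hw
    rw [hWdef] at hw
    simp only [mem_erase, mem_univ, and_true] at hw
    tauto
  intro u j
  rw [key u j]
  by_cases hua : u = a
  · obtain rfl := hua.symm
    have hins : (univ : Finset V).erase a = insert b (insert c (insert d W)) := by
      rw [hWdef]
      ext w
      simp only [mem_erase, mem_univ, and_true, mem_insert]
      constructor
      · intro hw
        by_cases h1 : w = b
        · exact Or.inl h1
        by_cases h2 : w = c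
        · exact Or.inr (Or.inl h2)
        by_cases h3 : w = d
        · exact Or.inr (Or.inr (Or.inl h3))
        exact Or.inr (Or.inr (Or.inr ⟨h3, h2, h1, hw⟩))
      · rintro (rfl | rfl | rfl | ⟨-, -, -, hw⟩)
        · exact hba
        · exact hca
        · exact hda
        · exact hw
    have hTb := htermab s(a, b) j hab' (hfib a b hne) hφab
    have hTc := hterm2 s(a, c) 1 j (hfib a c hac)
      (h0ne a c (fun ⟨_, h⟩ => hbc h) (fun ⟨h, _⟩ => hac h)) hφac
    have hTd := hterm1 s(a, d) 2 0 j (hfib a d had)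
      (h0ne a d (fun ⟨_, h⟩ => hbd h) (fun ⟨h, _⟩ => had h)) hφad (by decide)
    have hTW : ∀ w ∈ W,
        (univ.filter (fun e => (e ≠ e₀ ∧ φ e = j) ∧ ends e = s(a, w))).card
          = if j = 1 then 2 else 0 := by
      intro w hw
      obtain ⟨h1, h2, h3, h4⟩ := hWmem w hw
      exact hterm2 s(a, w) 1 j (hfib a w (Ne.symm h1))
        (h0ne a w (fun ⟨_, h⟩ => h2 h.symm) (fun ⟨h, _⟩ => h1 h.symm)) (hφav w h1 h2 h3 h4)
    rw [hins, sum_insert (by rw [hWdef]; simp [mem_insert, mem_erase, hbc, hbd]),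
      sum_insert (by rw [hWdef]; simp [mem_insert, mem_erase, hcd]),
      sum_insert (by rw [hWdef]; simp [mem_erase]),
      hTb, hTc, hTd, Finset.sum_congr rfl hTW, Finset.sum_const, hWcard, smul_eq_mul]
    fin_cases j
    · right; simp; try rw [Nat.odd_iff]; try omega
    · right; simp; try rw [Nat.odd_iff]; try omega
    · right; simp; try rw [Nat.odd_iff]; try omega
  by_cases hub : u = b
  · obtain rfl := hub.symm
    have hins : (univ : Finset V).erase b = insert a (insert c (insert d W)) := by
      rw [hWdef]
      ext w
      simp only [mem_erase, mem_univ, and_true, mem_insert]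
      constructor
      · intro hw
        by_cases h1 : w = a
        · exact Or.inl h1
        by_cases h2 : w = c
        · exact Or.inr (Or.inl h2)
        by_cases h3 : w = d
        · exact Or.inr (Or.inr (Or.inl h3))
        exact Or.inr (Or.inr (Or.inr ⟨h3, h2, hw, h1⟩))
      · rintro (rfl | rfl | rfl | ⟨-, -, hw, -⟩)
        · exact hne
        · exact hcb
        · exact hdb
        · exact hw
    have hTa := htermab s(b, a) j (hab'.trans Sym2.eq_swap) (hfib b a hba)
      (fun e he => hφab e (he.trans Sym2.eq_swap))
    have hTc := hterm1 s(b, c) 2 1 j (hfib b c hbc)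
      (h0ne b c (fun ⟨h, _⟩ => hne h) (fun ⟨h, _⟩ => hac h)) hφbc (by decide)
    have hTd := hterm2 s(b, d) 0 j (hfib b d hbd)
      (h0ne b d (fun ⟨h, _⟩ => hne h) (fun ⟨h, _⟩ => had h)) hφbd
    have hTW : ∀ w ∈ W,
        (univ.filter (fun e => (e ≠ e₀ ∧ φ e = j) ∧ ends e = s(b, w))).card
          = if j = 0 then 1 else if j = 1 then 1 else 0 := by
      intro w hw
      obtain ⟨h1, h2, h3, h4⟩ := hWmem w hw
      exact hterm1 s(b, w) 0 1 j (hfib b w (Ne.symm h2))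
        (h0ne b w (fun ⟨h, _⟩ => hne h) (fun ⟨h, _⟩ => h1 h.symm))
        (hφbv w h1 h2 h3 h4) (by decide)
    rw [hins, sum_insert (by rw [hWdef]; simp [mem_insert, mem_erase, hac, had]),
      sum_insert (by rw [hWdef]; simp [mem_insert, mem_erase, hcd]),
      sum_insert (by rw [hWdef]; simp [mem_erase]),
      hTa, hTc, hTd, Finset.sum_congr rfl hTW, Finset.sum_const, hWcard, smul_eq_mul]
    fin_cases j
    · right; simp; try rw [Nat.odd_iff]; try omega
    · right; simp; try rw [Nat.odd_iff]; try omega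
    · right; simp; try rw [Nat.odd_iff]; try omega
  by_cases huc : u = c
  · obtain rfl := huc.symm
    have hins : (univ : Finset V).erase c = insert a (insert b (insert d W)) := by
      rw [hWdef]
      ext w
      simp only [mem_erase, mem_univ, and_true, mem_insert]
      constructor
      · intro hw
        by_cases h1 : w = a
        · exact Or.inl h1
        by_cases h2 : w = b
        · exact Or.inr (Or.inl h2)
        by_cases h3 : w = d
        · exact Or.inr (Or.inr (Or.inl h3))
        exact Or.inr (Or.inr (Or.inr ⟨h3, hw, h2, h1⟩))
      · rintro (rfl | rfl | rfl | ⟨-, hw, -, -⟩)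
        · exact hac
        · exact hbc
        · exact hdc
        · exact hw
    have hTa := hterm2 s(c, a) 1 j (hfib c a hca)
      (h0ne c a (fun ⟨h, _⟩ => hac h) (fun ⟨_, h⟩ => hbc h))
      (fun e he => hφac e (he.trans Sym2.eq_swap))
    have hTb := hterm1 s(c, b) 2 1 j (hfib c b hcb)
      (h0ne c b (fun ⟨h, _⟩ => hac h) (fun ⟨h, _⟩ => hne h))
      (fun e he => hφbc e (he.trans Sym2.eq_swap)) (by decide)
    have hTd := hterm2 s(c, d) 2 j (hfib c d hcd)
      (h0ne c d (fun ⟨h, _⟩ => hac h) (fun ⟨h, _⟩ => had h)) hφcd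
    have hTW : ∀ w ∈ W,
        (univ.filter (fun e => (e ≠ e₀ ∧ φ e = j) ∧ ends e = s(c, w))).card
          = if j = 1 then 2 else 0 := by
      intro w hw
      obtain ⟨h1, h2, h3, h4⟩ := hWmem w hw
      exact hterm2 s(c, w) 1 j (hfib c w (Ne.symm h3))
        (h0ne c w (fun ⟨h, _⟩ => hac h) (fun ⟨_, h⟩ => hbc h)) (hφcv w h1 h2 h3 h4)
    rw [hins, sum_insert (by rw [hWdef]; simp [mem_insert, mem_erase, hne, had]),
      sum_insert (by rw [hWdef]; simp [mem_insert, mem_erase, hbd]),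
      sum_insert (by rw [hWdef]; simp [mem_erase]),
      hTa, hTb, hTd, Finset.sum_congr rfl hTW, Finset.sum_const, hWcard, smul_eq_mul]
    fin_cases j
    · left; simp
    · right; simp; try rw [Nat.odd_iff]; try omega
    · right; simp; try rw [Nat.odd_iff]; try omega
  by_cases hud : u = d
  · obtain rfl := hud.symm
    have hins : (univ : Finset V).erase d = insert a (insert b (insert c W)) := by
      rw [hWdef]
      ext w
      simp only [mem_erase, mem_univ, and_true, mem_insert]
      constructor
      · intro hw
        by_cases h1 : w = a
        · exact Or.inl h1
        by_cases h2 : w = b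
        · exact Or.inr (Or.inl h2)
        by_cases h3 : w = c
        · exact Or.inr (Or.inr (Or.inl h3))
        exact Or.inr (Or.inr (Or.inr ⟨hw, h3, h2, h1⟩))
      · rintro (rfl | rfl | rfl | ⟨hw, -, -, -⟩)
        · exact had
        · exact hbd
        · exact hcd
        · exact hw
    have hTa := hterm1 s(d, a) 2 0 j (hfib d a hda)
      (h0ne d a (fun ⟨h, _⟩ => had h) (fun ⟨_, h⟩ => hbd h))
      (fun e he => hφad e (he.trans Sym2.eq_swap)) (by decide)
    have hTb := hterm2 s(d, b) 0 j (hfib d b hdb)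
      (h0ne d b (fun ⟨h, _⟩ => had h) (fun ⟨h, _⟩ => hne h))
      (fun e he => hφbd e (he.trans Sym2.eq_swap))
    have hTc := hterm2 s(d, c) 2 j (hfib d c hdc)
      (h0ne d c (fun ⟨h, _⟩ => had h) (fun ⟨h, _⟩ => hac h))
      (fun e he => hφcd e (he.trans Sym2.eq_swap))
    have hTW : ∀ w ∈ W,
        (univ.filter (fun e => (e ≠ e₀ ∧ φ e = j) ∧ ends e = s(d, w))).card
          = if j = 0 then 2 else 0 := by
      intro w hw
      obtain ⟨h1, h2, h3, h4⟩ := hWmem w hw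
      exact hterm2 s(d, w) 0 j (hfib d w (Ne.symm h4))
        (h0ne d w (fun ⟨h, _⟩ => had h) (fun ⟨_, h⟩ => hbd h)) (hφdv w h1 h2 h3 h4)
    rw [hins, sum_insert (by rw [hWdef]; simp [mem_insert, mem_erase, hne, hac]),
      sum_insert (by rw [hWdef]; simp [mem_insert, mem_erase, hbc]),
      sum_insert (by rw [hWdef]; simp [mem_erase]),
      hTa, hTb, hTc, Finset.sum_congr rfl hTW, Finset.sum_const, hWcard, smul_eq_mul]
    fin_cases j
    · right; simp; try rw [Nat.odd_iff]; try omega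
    · left; simp
    · right; simp; try rw [Nat.odd_iff]; try omega
  -- generic vertex
  · have hau : a ≠ u := fun h => hua h.symm
    have hbu' : b ≠ u := fun h => hub h.symm
    have hcu : c ≠ u := fun h => huc h.symm
    have hdu : d ≠ u := fun h => hud h.symm
    have huW : u ∈ W := by
      rw [hWdef]
      simp only [mem_erase, mem_univ, and_true]
      exact ⟨hud, huc, hub, hua⟩
    obtain ⟨W', hW'def⟩ : ∃ W' : Finset V, W' = W.erase u := ⟨_, rfl⟩
    have hW'card : W'.card = 2 * ℓ - 4 := by
      rw [hW'def, card_erase_of_mem huW, hWcard]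
      omega
    have hins : (univ : Finset V).erase u = insert a (insert b (insert c (insert d W'))) := by
      rw [hW'def, hWdef]
      ext w
      simp only [mem_erase, mem_univ, and_true, mem_insert]
      constructor
      · intro hw
        by_cases h1 : w = a
        · exact Or.inl h1
        by_cases h2 : w = b
        · exact Or.inr (Or.inl h2)
        by_cases h3 : w = c
        · exact Or.inr (Or.inr (Or.inl h3))
        by_cases h4 : w = d
        · exact Or.inr (Or.inr (Or.inr (Or.inl h4)))
        exact Or.inr (Or.inr (Or.inr (Or.inr ⟨hw, h4, h3, h2, h1⟩)))
      · rintro (rfl | rfl | rfl | rfl | ⟨hw, -⟩)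
        · exact hau
        · exact hbu'
        · exact hcu
        · exact hdu
        · exact hw
    have hTa := hterm2 s(u, a) 1 j (hfib u a hua)
      (h0ne u a (fun ⟨h, _⟩ => hau h) (fun ⟨_, h⟩ => hbu' h))
      (fun e he => hφav u hua hub huc hud e (he.trans Sym2.eq_swap))
    have hTb := hterm1 s(u, b) 0 1 j (hfib u b hub)
      (h0ne u b (fun ⟨h, _⟩ => hau h) (fun ⟨h, _⟩ => hne h))
      (fun e he => hφbv u hua hub huc hud e (he.trans Sym2.eq_swap)) (by decide)
    have hTc := hterm2 s(u, c) 1 j (hfib u c huc)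
      (h0ne u c (fun ⟨h, _⟩ => hau h) (fun ⟨h, _⟩ => hac h))
      (fun e he => hφcv u hua hub huc hud e (he.trans Sym2.eq_swap))
    have hTd := hterm2 s(u, d) 0 j (hfib u d hud)
      (h0ne u d (fun ⟨h, _⟩ => hau h) (fun ⟨h, _⟩ => had h))
      (fun e he => hφdv u hua hub huc hud e (he.trans Sym2.eq_swap))
    have hTW : ∀ w ∈ W',
        (univ.filter (fun e => (e ≠ e₀ ∧ φ e = j) ∧ ends e = s(u, w))).card
          = if j = 1 then 2 else 0 := by
      intro w hw
      rw [hW'def, mem_erase] at hw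
      obtain ⟨hwu, hw⟩ := hw
      obtain ⟨h1, h2, h3, h4⟩ := hWmem w hw
      exact hterm2 s(u, w) 1 j (hfib u w (Ne.symm hwu))
        (h0ne u w (fun ⟨h, _⟩ => hau h) (fun ⟨h, _⟩ => h1 h.symm))
        (hφvv u w hua hub huc hud h1 h2 h3 h4)
    rw [hins,
      sum_insert (by rw [hW'def, hWdef]; simp [mem_insert, mem_erase, hne, hac, had]),
      sum_insert (by rw [hW'def, hWdef]; simp [mem_insert, mem_erase, hbc, hbd]),
      sum_insert (by rw [hW'def, hWdef]; simp [mem_insert, mem_erase, hcd]),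
      sum_insert (by rw [hW'def, hWdef]; simp [mem_erase]),
      hTa, hTb, hTc, hTd, Finset.sum_congr rfl hTW, Finset.sum_const, hW'card, smul_eq_mul]
    fin_cases j
    · right; simp; try rw [Nat.odd_iff]; try omega
    · right; simp; try rw [Nat.odd_iff]; try omega
    · left; simp
end

section
/- If S is a Shannon triangle of type (2,2,2), then the odd chromatic index of S equals 6; if S is a Shannon triangle of type (2,2,1), then the odd chromatic index of S equals 5. -/
/-- The bouquet of parallel edges between `u` and `w`. -/
def bouquet {V E : Type*} (ends : E → Sym2 V) (u w : V) : Set E :=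
  {e | ends e = s(u, w)}

/-- A Shannon triangle of type (2,2,2): three pairwise adjacent vertices, each bouquet
of positive even size. -/
def IsShannon222 {V E : Type*} [Fintype V] (ends : E → Sym2 V) : Prop :=
  Fintype.card V = 3 ∧ ∀ u w : V, u ≠ w →
    0 < (bouquet ends u w).ncard ∧ Even (bouquet ends u w).ncard

/-- A Shannon triangle of type (2,2,1): three pairwise adjacent vertices, two bouquets
of positive even size and one of odd size. -/
def IsShannon221 {V E : Type*} [Fintype V] (ends : E → Sym2 V) : Prop :=
  Fintype.card V = 3 ∧ ∃ a b c : V, a ≠ b ∧ a ≠ c ∧ b ≠ c ∧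
    0 < (bouquet ends a b).ncard ∧ Even (bouquet ends a b).ncard ∧
    0 < (bouquet ends a c).ncard ∧ Even (bouquet ends a c).ncard ∧
    Odd (bouquet ends b c).ncard

/-- A multigraph admits an odd `k`-edge-coloring. -/
def OddColorable {V E : Type*} [Fintype E] (ends : E → Sym2 V) (k : ℕ) : Prop :=
  ∃ φ : E → Fin k, ∀ (u : V) (j : Fin k),
    {e | φ e = j ∧ u ∈ ends e}.ncard = 0 ∨ Odd {e | φ e = j ∧ u ∈ ends e}.ncard

/-!
In an odd colouring of a loopless triangle every colour class lies inside a single bouquet: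
a class meeting two bouquets meets all three vertices, so it would have odd degree at each
of them, while its degrees sum to twice its number of edges. A class inside a bouquet is then
odd, so a bouquet of size `n > 0` carries at least `2 - n % 2` colours, and different bouquets
carry different colours; this gives `6` colours for type (2,2,2) and `5` for type (2,2,1).
Conversely, giving every bouquet its own colour, after splitting one edge off each even
bouquet, is an odd colouring with exactly that many colours.
-/

open Finset

section Incidence

variable {V E : Type*} [Fintype V] [DecidableEq V] (ends : E → Sym2 V)

theorem sum_card_filter_mem_ends (hloopless : ∀ e, ¬(ends e).IsDiag) (F : Finset E) :
    ∑ u, #{e ∈ F | u ∈ ends e} = 2 * #F := by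
  have hdeg : ∀ e, #{u | u ∈ ends e} = 2 := fun e => by
    rw [← Sym2.card_toFinset_of_not_isDiag _ (hloopless e)]
    congr 1
    ext u
    simp [Sym2.mem_toFinset]
  have := sum_card_bipartiteAbove_eq_sum_card_bipartiteBelow (s := univ) (t := F)
    (fun u e => u ∈ ends e)
  simp only [bipartiteAbove, bipartiteBelow] at this
  rw [this, sum_congr rfl fun e _ => hdeg e, sum_const, smul_eq_mul, mul_comm]

theorem Sym2.mem_or_mem_of_card_eq_three (hV : Fintype.card V = 3) {z z' : Sym2 V}
    (hz : ¬z.IsDiag) (hz' : ¬z'.IsDiag) (hne : z ≠ z') (u : V) : u ∈ z ∨ u ∈ z' := by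
  by_contra! hu
  have hcard : #(univ.erase u) = 2 := by rw [card_erase_of_mem (mem_univ u), card_univ, hV]
  have hfill : ∀ {y : Sym2 V}, ¬y.IsDiag → u ∉ y → y.toFinset = univ.erase u := fun hy huy =>
    eq_of_subset_of_card_le (fun x hx => mem_erase.2 ⟨fun h => huy (h ▸ Sym2.mem_toFinset.1 hx),
      mem_univ x⟩) (by rw [hcard, Sym2.card_toFinset_of_not_isDiag _ hy])
  refine hne (Sym2.ext fun x => ?_)
  rw [← Sym2.mem_toFinset, ← Sym2.mem_toFinset, hfill hz hu.1, hfill hz' hu.2]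

end Incidence

section Coloring

variable {V E C : Type*} (ends : E → Sym2 V)

def IsOddColoring (φ : E → C) : Prop :=
  ∀ (u : V) (c : C), {e | φ e = c ∧ u ∈ ends e}.ncard = 0 ∨ Odd {e | φ e = c ∧ u ∈ ends e}.ncard

variable {ends}

theorem IsOddColoring.of_eq_iff_eq {C' : Type*} {φ : E → C} {ψ : E → C'}
    (hφ : IsOddColoring ends φ) (hψφ : ∀ e e', ψ e = ψ e' ↔ φ e = φ e') :
    IsOddColoring ends ψ := by
  intro u d
  by_cases hd : ∃ e₀, ψ e₀ = d
  · obtain ⟨e₀, rfl⟩ := hd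
    simp only [hψφ]
    exact hφ u (φ e₀)
  · left
    convert Set.ncard_empty E
    exact Set.eq_empty_of_forall_notMem fun e he => hd ⟨e, he.1⟩

theorem IsOddColoring.oddColorable [Fintype E] {φ : E → C} (hφ : IsOddColoring ends φ)
    {S : Finset C} (hS : ∀ e, φ e ∈ S) {k : ℕ} (hk : #S ≤ k) : OddColorable ends k := by
  obtain ⟨ι⟩ := Function.Embedding.nonempty_of_card_le (α := S) (β := Fin k) (by simpa using hk)
  exact ⟨fun e => ι ⟨φ e, hS e⟩, hφ.of_eq_iff_eq fun e e' => by simp⟩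

theorem isOddColoring_of_ends_eq {φ : E → C} (hends : ∀ e e', φ e = φ e' → ends e = ends e')
    (hodd : ∀ c, {e | φ e = c}.ncard = 0 ∨ Odd {e | φ e = c}.ncard) :
    IsOddColoring ends φ := by
  intro u c
  by_cases hu : ∃ e₀, φ e₀ = c ∧ u ∈ ends e₀
  · obtain ⟨e₀, rfl, hue₀⟩ := hu
    convert hodd (φ e₀) using 3 <;>
    · ext e
      exact ⟨And.left, fun he => ⟨he, hends e₀ e he.symm ▸ hue₀⟩⟩
  · left
    convert Set.ncard_empty E
    exact Set.eq_empty_of_forall_notMem fun e he => hu ⟨e, he⟩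

end Coloring

section LowerBound

variable {V E C : Type*} {ends : E → Sym2 V} {φ : E → C}

theorem IsOddColoring.ends_eq_of_eq [Fintype V] [Fintype E] (hφ : IsOddColoring ends φ)
    (hV : Fintype.card V = 3) (hloopless : ∀ e, ¬(ends e).IsDiag) {e e' : E}
    (h : φ e = φ e') : ends e = ends e' := by
  classical
  by_contra hne
  let F : Finset E := {x | φ x = φ e}
  have hdeg : ∀ u, Odd #{x ∈ F | u ∈ ends x} := fun u => by
    have hset : ({x | φ x = φ e ∧ u ∈ ends x} : Set E) = ↑{x ∈ F | u ∈ ends x} := by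
      ext x
      simp [F]
    have hpos : 0 < #{x ∈ F | u ∈ ends x} := card_pos.2 <| by
      rcases Sym2.mem_or_mem_of_card_eq_three hV (hloopless e) (hloopless e') hne u with hu | hu
      · exact ⟨e, by simp [F, hu]⟩
      · exact ⟨e', by simp [F, h, hu]⟩
    have := hφ u (φ e)
    rw [hset, Set.ncard_coe_finset] at this
    exact this.resolve_left hpos.ne'
  have hsum := sum_card_filter_mem_ends ends hloopless F
  have hodd : Odd (∑ u, #{x ∈ F | u ∈ ends x}) := by
    rw [odd_sum_iff_odd_card_odd, filter_true_of_mem fun u _ => hdeg u, card_univ, hV]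
    decide
  rw [hsum] at hodd
  exact Nat.not_odd_iff_even.2 (even_two_mul _) hodd

theorem IsOddColoring.even_ncard_image_bouquet_iff [Finite E] (hφ : IsOddColoring ends φ)
    (hends : ∀ e e', φ e = φ e' → ends e = ends e') (u w : V) :
    Even (φ '' bouquet ends u w).ncard ↔ Even (bouquet ends u w).ncard := by
  classical
  set B := (bouquet ends u w).toFinite.toFinset
  have hB : (B : Set E) = bouquet ends u w := Set.Finite.coe_toFinset _
  have hclass : ∀ c ∈ B.image φ, Odd #{e ∈ B | φ e = c} := fun c hc => by
    obtain ⟨e₀, he₀, rfl⟩ := mem_image.1 hc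
    have he₀' : e₀ ∈ bouquet ends u w := hB ▸ Finset.mem_coe.2 he₀
    have hset : ({e | φ e = φ e₀ ∧ u ∈ ends e} : Set E) = ↑{e ∈ B | φ e = φ e₀} := by
      ext e
      simp only [Set.mem_ofPred_eq, coe_filter, ← Finset.mem_coe, hB, bouquet]
      exact ⟨fun he => ⟨(hends e e₀ he.1).trans he₀', he.1⟩,
        fun he => ⟨he.2, he.1 ▸ Sym2.mem_mk_left u w⟩⟩
    have := hφ u (φ e₀)
    rw [hset, Set.ncard_coe_finset] at this
    exact this.resolve_left (card_ne_zero.2 ⟨e₀, mem_filter.2 ⟨he₀, rfl⟩⟩)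
  rw [← hB, ← coe_image, Set.ncard_coe_finset, Set.ncard_coe_finset, card_eq_sum_card_image φ B,
    even_sum_iff_even_card_odd, filter_true_of_mem hclass]

theorem IsOddColoring.two_sub_mod_two_le_ncard_image_bouquet [Finite E]
    (hφ : IsOddColoring ends φ) (hends : ∀ e e', φ e = φ e' → ends e = ends e') {u w : V}
    (hpos : 0 < (bouquet ends u w).ncard) :
    2 - (bouquet ends u w).ncard % 2 ≤ (φ '' bouquet ends u w).ncard := by
  have himage : 0 < (φ '' bouquet ends u w).ncard :=
    (Set.ncard_pos (Set.toFinite _)).2 ((Set.nonempty_of_ncard_ne_zero hpos.ne').image φ)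
  have hparity := hφ.even_ncard_image_bouquet_iff hends u w
  rw [Nat.even_iff, Nat.even_iff] at hparity
  omega

theorem ncard_image_bouquet_add_add_le [Finite C]
    (hends : ∀ e e', φ e = φ e' → ends e = ends e') {a b c : V}
    (hab : a ≠ b) (hac : a ≠ c) (hbc : b ≠ c) :
    (φ '' bouquet ends a b).ncard + (φ '' bouquet ends a c).ncard
      + (φ '' bouquet ends b c).ncard ≤ Nat.card C := by
  have hdisj : ∀ {x y z t : V}, s(x, y) ≠ s(z, t) →
      Disjoint (φ '' bouquet ends x y) (φ '' bouquet ends z t) := fun hne =>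
    Set.disjoint_left.2 fun _ ⟨e, he, hφe⟩ ⟨e', he', hφe'⟩ =>
      hne (he.symm.trans ((hends e e' (hφe.trans hφe'.symm)).trans he'))
  rw [← Set.ncard_union_eq (hdisj (Sym2.congr_right.not.2 hbc)),
    ← Set.ncard_union_eq (Set.disjoint_union_left.2
      ⟨hdisj (by rw [Sym2.eq_swap, Ne, Sym2.congr_right]; exact hac),
        hdisj (Sym2.congr_left.not.2 hab)⟩)]
  exact Set.ncard_le_card _

end LowerBound

section UpperBound

variable {V E : Type*} (ends : E → Sym2 V)

open scoped Classical in
/-- Colour each edge by its bouquet, giving the edge `rep p` of each even bouquet `p` a second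
colour of its own. -/
noncomputable def bouquetSplit (rep : Sym2 V → E) (e : E) : Sym2 V × Bool :=
  (ends e, decide (e = rep (ends e) ∧ Even (ends ⁻¹' {ends e}).ncard))

variable {ends}

theorem bouquetSplit_eq_iff {rep : Sym2 V → E} {e : E} {p : Sym2 V} {t : Bool} :
    bouquetSplit ends rep e = (p, t) ↔
      ends e = p ∧ (t = true ↔ e = rep p ∧ Even (ends ⁻¹' {p}).ncard) := by
  classical
  rw [bouquetSplit, Prod.mk.injEq, Bool.eq_iff_iff, decide_eq_true_iff]
  constructor <;> rintro ⟨rfl, ht⟩ <;> exact ⟨rfl, ht.symm⟩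

theorem isOddColoring_bouquetSplit [Finite E] {rep : Sym2 V → E}
    (hrep : ∀ e, ends (rep (ends e)) = ends e) : IsOddColoring ends (bouquetSplit ends rep) := by
  refine isOddColoring_of_ends_eq (fun e e' h => congrArg Prod.fst h) fun ⟨p, t⟩ => ?_
  simp only [bouquetSplit_eq_iff]
  rcases (ends ⁻¹' {p}).eq_empty_or_nonempty with hp | ⟨e₀, he₀⟩
  · left
    convert Set.ncard_empty E
    exact Set.eq_empty_of_forall_notMem fun e he => hp.subset he.1
  have hrep_mem : rep p ∈ ends ⁻¹' {p} := (he₀ : ends e₀ = p) ▸ hrep e₀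
  by_cases heven : Even (ends ⁻¹' {p}).ncard <;> cases t
  · right
    convert_to Odd (ends ⁻¹' {p} \ {rep p}).ncard using 3
    · ext e
      simp [heven]
    rw [Set.ncard_sdiff_singleton_of_mem hrep_mem]
    exact Nat.Even.sub_odd ((Set.ncard_pos).2 ⟨e₀, he₀⟩) heven odd_one
  · right
    convert_to Odd ({rep p} : Set E).ncard using 3
    · ext e
      simp only [Set.mem_ofPred_eq, Set.mem_singleton_iff, heven, and_true, true_iff]
      exact ⟨And.right, fun he => ⟨he ▸ hrep_mem, he⟩⟩
    rw [Set.ncard_singleton]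
    exact odd_one
  · right
    convert_to Odd (ends ⁻¹' {p}).ncard using 3
    · ext e
      simp [heven]
    exact Nat.not_even_iff_odd.1 heven
  · left
    convert Set.ncard_empty E
    exact Set.eq_empty_of_forall_notMem fun e he => heven (he.2.1 rfl).2

end UpperBound

section Triangle

variable {V E : Type*} {ends : E → Sym2 V}

theorem Sym2.eq_or_eq_or_eq_of_card_eq_three [Fintype V] (hV : Fintype.card V = 3) {a b c : V}
    (hab : a ≠ b) (hac : a ≠ c) (hbc : b ≠ c) {z : Sym2 V} (hz : ¬z.IsDiag) :
    z = s(a, b) ∨ z = s(a, c) ∨ z = s(b, c) := by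
  classical
  have huniv : ({a, b, c} : Finset V) = univ :=
    eq_univ_of_card _ (by simp [card_insert_of_notMem, hab, hac, hbc, hV])
  have hmem : ∀ v, v = a ∨ v = b ∨ v = c := fun v => by
    simpa using (huniv.symm ▸ mem_univ v : v ∈ ({a, b, c} : Finset V))
  induction z using Sym2.ind with
  | h x y =>
    rw [Sym2.mk_isDiag_iff] at hz
    rcases hmem x with rfl | rfl | rfl <;> rcases hmem y with rfl | rfl | rfl <;>
      simp_all [Sym2.eq_swap]

theorem OddColorable.sum_two_sub_mod_two_le [Fintype V] [Fintype E] {k : ℕ}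
    (h : OddColorable ends k) (hV : Fintype.card V = 3) (hloopless : ∀ e, ¬(ends e).IsDiag)
    {a b c : V} (hab : a ≠ b) (hac : a ≠ c) (hbc : b ≠ c)
    (hab₀ : 0 < (bouquet ends a b).ncard) (hac₀ : 0 < (bouquet ends a c).ncard)
    (hbc₀ : 0 < (bouquet ends b c).ncard) :
    (2 - (bouquet ends a b).ncard % 2) + (2 - (bouquet ends a c).ncard % 2)
      + (2 - (bouquet ends b c).ncard % 2) ≤ k := by
  obtain ⟨φ, hφ⟩ := h
  have hφ : IsOddColoring ends φ := hφ
  have hends : ∀ e e', φ e = φ e' → ends e = ends e' := fun _ _ => hφ.ends_eq_of_eq hV hloopless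
  calc _ ≤ (φ '' bouquet ends a b).ncard + (φ '' bouquet ends a c).ncard
          + (φ '' bouquet ends b c).ncard := by
        gcongr <;> exact hφ.two_sub_mod_two_le_ncard_image_bouquet hends ‹_›
    _ ≤ Nat.card (Fin k) := ncard_image_bouquet_add_add_le hends hab hac hbc
    _ = k := Nat.card_eq_fintype_card.trans (Fintype.card_fin k)

theorem oddColorable_six [Fintype E] [Nonempty E] {a b c : V}
    (hends : ∀ e, ends e = s(a, b) ∨ ends e = s(a, c) ∨ ends e = s(b, c)) :
    OddColorable ends 6 := by
  classical
  refine (isOddColoring_bouquetSplit (rep := Function.invFun ends)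
    fun e => Function.invFun_eq ⟨e, rfl⟩).oddColorable
    (S := {s(a, b), s(a, c), s(b, c)} ×ˢ univ) (fun e => ?_) ?_
  · exact mem_product.2 ⟨by simpa [bouquetSplit] using hends e, mem_univ _⟩
  · rw [card_product, card_univ, Fintype.card_bool]
    have := card_le_three (a := s(a, b)) (b := s(a, c)) (c := s(b, c))
    omega

theorem oddColorable_five [Fintype E] [Nonempty E] {a b c : V}
    (hends : ∀ e, ends e = s(a, b) ∨ ends e = s(a, c) ∨ ends e = s(b, c))
    (hbc : Odd (bouquet ends b c).ncard) :
    OddColorable ends 5 := by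
  classical
  refine (isOddColoring_bouquetSplit (rep := Function.invFun ends)
    fun e => Function.invFun_eq ⟨e, rfl⟩).oddColorable
    (S := {s(a, b), s(a, c)} ×ˢ univ ∪ {(s(b, c), false)}) (fun e => ?_) ?_
  · rcases hends e with he | he | he
    · exact mem_union_left _ (mem_product.2 ⟨by simp [bouquetSplit, he], mem_univ _⟩)
    · exact mem_union_left _ (mem_product.2 ⟨by simp [bouquetSplit, he], mem_univ _⟩)
    · refine mem_union_right _ (mem_singleton.2 (bouquetSplit_eq_iff.2 ⟨he, ?_⟩))
      simp only [Bool.false_eq_true, false_iff, not_and]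
      exact fun _ => Nat.not_even_iff_odd.2 hbc
  · calc _ ≤ #({s(a, b), s(a, c)} ×ˢ (univ : Finset Bool)) + 1 := card_union_le _ _
      _ ≤ 2 * 2 + 1 := by
        rw [card_product, card_univ, Fintype.card_bool]
        gcongr
        exact card_le_two

end Triangle

/-- If `S` is a Shannon triangle of type (2,2,2), its odd chromatic index equals 6;
if `S` is a Shannon triangle of type (2,2,1), its odd chromatic index equals 5. -/
theorem stmt_18 {V E : Type*} [Fintype V] [Fintype E]
    (ends : E → Sym2 V)
    (hloopless : ∀ e, ¬ (ends e).IsDiag) :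
    (IsShannon222 ends →
      OddColorable ends 6 ∧ ¬ OddColorable ends 5) ∧
    (IsShannon221 ends →
      OddColorable ends 5 ∧ ¬ OddColorable ends 4) := by
  classical
  refine ⟨fun ⟨hV, hB⟩ => ?_, fun ⟨hV, a, b, c, hab, hac, hbc, hab₀, habe, hac₀, hace, hbco⟩ => ?_⟩
  · obtain ⟨a, b, c, hab, hac, hbc, -⟩ :=
      card_eq_three.1 (by rwa [card_univ] : #(univ : Finset V) = 3)
    obtain ⟨hab₀, habe⟩ := hB a b hab
    obtain ⟨hac₀, hace⟩ := hB a c hac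
    obtain ⟨hbc₀, hbce⟩ := hB b c hbc
    have : Nonempty E := ⟨(Set.nonempty_of_ncard_ne_zero hab₀.ne').some⟩
    refine ⟨oddColorable_six fun e =>
      Sym2.eq_or_eq_or_eq_of_card_eq_three hV hab hac hbc (hloopless e), fun h => ?_⟩
    have := h.sum_two_sub_mod_two_le hV hloopless hab hac hbc hab₀ hac₀ hbc₀
    rw [Nat.even_iff] at habe hace hbce
    omega
  · have : Nonempty E := ⟨(Set.nonempty_of_ncard_ne_zero hab₀.ne').some⟩
    refine ⟨oddColorable_five (fun e => Sym2.eq_or_eq_or_eq_of_card_eq_three hV hab hac hbc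
      (hloopless e)) hbco, fun h => ?_⟩
    have := h.sum_two_sub_mod_two_le hV hloopless hab hac hbc hab₀ hac₀ hbco.pos
    rw [Nat.even_iff] at habe hace
    rw [Nat.odd_iff] at hbco
    omega
end

section
/- Let G be a loopless multigraph and let red(G) be the spanning subgraph obtained by, in each bouquet of parallel edges, keeping exactly 1 edge if the bouquet has odd size and exactly 2 edges if it has even size. Then the odd chromatic index of red(G) is at least the odd chromatic index of G. -/
/-- Let `G` be a loopless multigraph and `R` the edge set of a reduction `red(G)`:
in each bouquet of parallel edges it keeps exactly 1 edge if the bouquet has odd size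
and exactly 2 edges if it has (positive) even size. Then any odd `k`-edge-coloring of
`red(G)` yields an odd `k`-edge-coloring of `G`; in particular the odd chromatic index
of `red(G)` is at least that of `G`. -/
theorem stmt_19 {V E : Type*} [Fintype V] [Fintype E]
    (ends : E → Sym2 V)
    (hloopless : ∀ e, ¬ (ends e).IsDiag)
    (R : Set E)
    (hR : ∀ u w : V, u ≠ w →
      (Odd {e | ends e = s(u, w)}.ncard →
        {e | e ∈ R ∧ ends e = s(u, w)}.ncard = 1) ∧
      (Even {e | ends e = s(u, w)}.ncard → 0 < {e | ends e = s(u, w)}.ncard →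
        {e | e ∈ R ∧ ends e = s(u, w)}.ncard = 2)) :
    ∀ k : ℕ,
      (∃ φ : E → Fin k, ∀ (u : V) (j : Fin k),
        {e | e ∈ R ∧ φ e = j ∧ u ∈ ends e}.ncard = 0 ∨
          Odd {e | e ∈ R ∧ φ e = j ∧ u ∈ ends e}.ncard) →
      (∃ φ : E → Fin k, ∀ (u : V) (j : Fin k),
        {e | φ e = j ∧ u ∈ ends e}.ncard = 0 ∨
          Odd {e | φ e = j ∧ u ∈ ends e}.ncard) := by
  classical
  -- In each nonempty bouquet, the set of non-kept edges is even,
  -- and there exists a kept edge.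
  have even_nonR : ∀ u w : V, u ≠ w →
      Even {x | x ∉ R ∧ ends x = s(u, w)}.ncard := by
    intro u w huw
    have hdisj : Disjoint {x | x ∈ R ∧ ends x = s(u, w)} {x | x ∉ R ∧ ends x = s(u, w)} := by
      rw [Set.disjoint_left]; rintro x ⟨hx, _⟩ ⟨hx', _⟩; exact hx' hx
    have hunion : {x | ends x = s(u, w)} =
        {x | x ∈ R ∧ ends x = s(u, w)} ∪ {x | x ∉ R ∧ ends x = s(u, w)} := by
      ext x; by_cases hx : x ∈ R <;> simp [hx]
    have hsum : {x | ends x = s(u, w)}.ncard =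
        {x | x ∈ R ∧ ends x = s(u, w)}.ncard + {x | x ∉ R ∧ ends x = s(u, w)}.ncard := by
      rw [hunion]; exact Set.ncard_union_eq hdisj (Set.toFinite _) (Set.toFinite _)
    rcases Nat.even_or_odd {x | ends x = s(u, w)}.ncard with hev | hod
    · by_cases h0 : {x | ends x = s(u, w)}.ncard = 0
      · have hle : {x | x ∉ R ∧ ends x = s(u, w)}.ncard ≤ {x | ends x = s(u, w)}.ncard :=
          Set.ncard_le_ncard (fun x hx => hx.2) (Set.toFinite _)
        have : {x | x ∉ R ∧ ends x = s(u, w)}.ncard = 0 := by omega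
        simp [this]
      · have h2 := (hR u w huw).2 hev (Nat.pos_of_ne_zero h0)
        rw [h2] at hsum
        have := hsum ▸ hev
        exact (Nat.even_add.mp this).mp (by norm_num)
    · have h1 := (hR u w huw).1 hod
      rw [h1] at hsum
      have := hsum ▸ hod
      exact (Nat.odd_add.mp this).mp (by norm_num)
  have hex : ∀ e : E, ∃ x, x ∈ R ∧ ends x = ends e := by
    intro e
    obtain ⟨w, he⟩ : ∃ w, ends e = s(_, w) := Sym2.mem_iff_exists.mp (Sym2.out_fst_mem (ends e))
    set u := (ends e).out.1
    have huw : u ≠ w := by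
      intro h; exact hloopless e (by rw [he, h]; exact Sym2.mk_isDiag_iff.mpr rfl)
    have hpos : 0 < {x | ends x = s(u, w)}.ncard := by
      rcases Nat.eq_zero_or_pos {x | ends x = s(u, w)}.ncard with h0 | h
      · exact absurd ((Set.ncard_eq_zero (Set.toFinite _)).mp h0 ▸ he : e ∈ (∅ : Set E)) (by simp)
      · exact h
    have hRpos : 0 < {x | x ∈ R ∧ ends x = s(u, w)}.ncard := by
      rcases Nat.even_or_odd {x | ends x = s(u, w)}.ncard with hev | hod
      · rw [(hR u w huw).2 hev hpos]; norm_num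
      · rw [(hR u w huw).1 hod]; norm_num
    obtain ⟨x, hx⟩ : {x | x ∈ R ∧ ends x = s(u, w)}.Nonempty := by
      rw [Set.nonempty_iff_ne_empty]
      intro h; rw [h] at hRpos; simp at hRpos
    exact ⟨x, hx.1, hx.2.trans he.symm⟩
  intro k ⟨φ, hφ⟩
  -- a canonical kept edge in each bouquet
  set pick : Sym2 V → Option E := fun s =>
    if h : ∃ x, x ∈ R ∧ ends x = s then some h.choose else none with hpickdef
  have pick_eq : ∀ e : E, pick (ends e) = some (hex e).choose := fun e => dif_pos (hex e)
  set p : E → E := fun e => (hex e).choose with hpdef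
  have pR : ∀ e, p e ∈ R := fun e => (hex e).choose_spec.1
  have pEnds : ∀ e, ends (p e) = ends e := fun e => (hex e).choose_spec.2
  have p_congr : ∀ e e', ends e = ends e' → p e = p e' := by
    intro e e' h
    exact Option.some.inj ((pick_eq e).symm.trans ((congrArg pick h).trans (pick_eq e')))
  set ψ : E → Fin k := fun e => if e ∈ R then φ e else φ (p e) with hψdef
  have ψR : ∀ e, e ∈ R → ψ e = φ e := fun e h => if_pos h
  have ψnR : ∀ e, e ∉ R → ψ e = φ (p e) := fun e h => if_neg h
  refine ⟨ψ, fun u j => ?_⟩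
  set A := {e | e ∈ R ∧ φ e = j ∧ u ∈ ends e} with hAdef
  set B := {e | e ∉ R ∧ ψ e = j ∧ u ∈ ends e} with hBdef
  have hdisj : Disjoint A B := by
    rw [Set.disjoint_left]; rintro x ⟨hx, _⟩ ⟨hx', _⟩; exact hx' hx
  have hunion : {e | ψ e = j ∧ u ∈ ends e} = A ∪ B := by
    ext e
    by_cases he : e ∈ R
    · simp [hAdef, hBdef, he, ψR e he]
    · simp [hAdef, hBdef, he]
  have hsum : {e | ψ e = j ∧ u ∈ ends e}.ncard = A.ncard + B.ncard := by
    rw [hunion]; exact Set.ncard_union_eq hdisj (Set.toFinite _) (Set.toFinite _)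
  by_cases hB : B = ∅
  · rw [hB, Set.ncard_empty, add_zero] at hsum
    rw [hsum]; exact hφ u j
  · right
    obtain ⟨e, heB⟩ := Set.nonempty_iff_ne_empty.mpr hB
    obtain ⟨heR, heψ, heu⟩ := heB
    -- A is nonempty, hence of odd cardinality
    have hAodd : Odd A.ncard := by
      have hpA : p e ∈ A := ⟨pR e, by rw [← ψnR e heR]; exact heψ, by rw [pEnds]; exact heu⟩
      rcases hφ u j with h0 | hodd
      · exact absurd ((Set.ncard_eq_zero (Set.toFinite _)).mp h0 ▸ hpA : p e ∈ (∅ : Set E))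
          (by simp)
      · exact hodd
    -- B has even cardinality: fiberwise over the ends
    have hBeven : Even B.ncard := by
      have hBf : B.ncard =
          (Finset.univ.filter (fun x => x ∉ R ∧ ψ x = j ∧ u ∈ ends x)).card := by
        rw [← Set.ncard_coe_finset]; congr 1; ext x; simp [hBdef]
      rw [hBf,
        Finset.card_eq_sum_card_fiberwise (f := ends) (t := Finset.univ)
          (fun x _ => Finset.mem_univ _)]
      apply Finset.even_sum
      intro s _
      by_cases hfib : (Finset.filter (fun a => ends a = s)
          (Finset.univ.filter (fun x => x ∉ R ∧ ψ x = j ∧ u ∈ ends x))) = ∅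
      · simp [hfib]
      · obtain ⟨x, hx⟩ := Finset.nonempty_iff_ne_empty.mpr hfib
        simp only [Finset.mem_filter, Finset.mem_univ, true_and] at hx
        obtain ⟨⟨hxR, hxψ, hxu⟩, hxs⟩ := hx
        obtain ⟨w, hw⟩ : ∃ w, ends x = s(u, w) := Sym2.mem_iff_exists.mp hxu
        have huw : u ≠ w := by
          intro h; exact hloopless x (by rw [hw, h]; exact Sym2.mk_isDiag_iff.mpr rfl)
        have hfull : (Finset.filter (fun a => ends a = s)
            (Finset.univ.filter (fun y => y ∉ R ∧ ψ y = j ∧ u ∈ ends y)))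
            = Finset.univ.filter (fun y => y ∉ R ∧ ends y = s(u, w)) := by
          ext y
          simp only [Finset.mem_filter, Finset.mem_univ, true_and]
          constructor
          · rintro ⟨⟨hyR, _, _⟩, hys⟩
            exact ⟨hyR, by rw [hys, ← hxs, hw]⟩
          · rintro ⟨hyR, hyw⟩
            have hyx : ends y = ends x := by rw [hyw, hw]
            refine ⟨⟨hyR, ?_, by rw [hyw]; exact Sym2.mem_mk_left u w⟩, by rw [hyx, hxs]⟩
            rw [ψnR y hyR, p_congr y x hyx, ← ψnR x hxR, hxψ]
        rw [hfull]
        have := even_nonR u w huw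
        have hset : {y | y ∉ R ∧ ends y = s(u, w)}.ncard
            = (Finset.univ.filter (fun y => y ∉ R ∧ ends y = s(u, w))).card := by
          rw [← Set.ncard_coe_finset]; congr 1; ext y; simp
        rw [← hset]
        exact this
    rw [hsum]
    exact hAodd.add_even hBeven
end
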